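/- arXiv:1003.1675 — 6 statements merged into one kernel-verified Lean document; each statement's English description precedes it below -/
import Mathlib

section
/- For every n ∈ ℕ there exist constants C_n, D_n > 0, depending only on n, with the following property. Let d ∈ ℕ and let B₁, …, B_{2n} be d×d matrices all of whose entries are 0 or 1, with each row and each column of each B_j containing at most one nonzero entry. Let U be a uniformly distributed random d×d permutation matrix and set f(d) = max_{1 ≤ j ≤ 2n} tr_d(B_j). Then ∫ tr_d( B₁ (U B₂ U*) B₃ (U B₄ U*) ⋯ B_{2n−1} (U B_{2n} U*) ) dU ≤ C_n f(d) + D_n d^{−1}. -/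
open scoped Classical

/-- The `d × d` permutation matrix of a permutation `σ`, with `(i, j)`-entry equal to `1`
iff `σ j = i`. -/
def permMat {d : ℕ} (σ : Equiv.Perm (Fin d)) : Matrix (Fin d) (Fin d) ℝ :=
  Matrix.of fun i j => if σ j = i then 1 else 0

/-- The alternating product `B₁ (U B₂ U*) B₃ (U B₄ U*) ⋯ B_{2n-1} (U B_{2n} U*)`
(indices `0, …, 2n-1` here). -/
noncomputable def momentProd {n d : ℕ} (B : Fin (2 * n) → Matrix (Fin d) (Fin d) ℝ)
    (U : Matrix (Fin d) (Fin d) ℝ) : Matrix (Fin d) (Fin d) ℝ :=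
  (List.ofFn fun k : Fin n =>
    B ⟨2 * k.1, by have := k.isLt; omega⟩ *
      (U * B ⟨2 * k.1 + 1, by have := k.isLt; omega⟩ * U.transpose)).prod

open scoped Nat
set_option linter.unusedSectionVars false

/-! ### Part I: 0/1 matrices with ≤1 nonzero per row/column as partial maps -/

/-- matrix of a partial map: entry (i,j) is 1 iff f j = some i -/
def matOf {d : ℕ} (f : Fin d → Option (Fin d)) : Matrix (Fin d) (Fin d) ℝ :=
  Matrix.of fun i j => if f j = some i then 1 else 0

/-- partial map of a 0/1 matrix -/
noncomputable def pmapOf {d : ℕ} (M : Matrix (Fin d) (Fin d) ℝ) : Fin d → Option (Fin d) :=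
  fun l => if h : ∃ k, M k l ≠ 0 then some h.choose else none

lemma matOf_pmapOf {d : ℕ} (M : Matrix (Fin d) (Fin d) ℝ)
    (h01 : ∀ k l, M k l = 0 ∨ M k l = 1)
    (hcol : ∀ k k' l, M k l ≠ 0 → M k' l ≠ 0 → k = k') :
    matOf (pmapOf M) = M := by
  ext i j
  simp only [matOf, Matrix.of_apply, pmapOf]
  by_cases h : ∃ k, M k j ≠ 0
  · simp only [dif_pos h]
    by_cases hij : h.choose = i
    · subst hij
      rcases h01 h.choose j with h0 | h1
      · exact absurd h0 h.choose_spec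
      · simp [h1]
    · have : M i j = 0 := by
        by_contra hne
        exact hij (hcol _ _ _ h.choose_spec hne)
      simp [this, Option.some_inj, hij]
  · simp only [dif_neg h]
    push_neg at h
    simp [h i]

lemma pmapOf_inj {d : ℕ} (M : Matrix (Fin d) (Fin d) ℝ)
    (hrow : ∀ k l l', M k l ≠ 0 → M k l' ≠ 0 → l = l') :
    ∀ a b c, pmapOf M a = some c → pmapOf M b = some c → a = b := by
  intro a b c ha hb
  simp only [pmapOf] at ha hb
  by_cases h1 : ∃ k, M k a ≠ 0
  · by_cases h2 : ∃ k, M k b ≠ 0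
    · rw [dif_pos h1] at ha; rw [dif_pos h2] at hb
      have e1 : h1.choose = c := by exact Option.some_inj.mp ha
      have e2 : h2.choose = c := by exact Option.some_inj.mp hb
      exact hrow c a b (e1 ▸ h1.choose_spec) (e2 ▸ h2.choose_spec)
    · rw [dif_neg h2] at hb; exact absurd hb (by simp)
  · rw [dif_neg h1] at ha; exact absurd ha (by simp)

lemma matOf_mul {d : ℕ} (f g : Fin d → Option (Fin d)) :
    matOf f * matOf g = matOf (fun j => (g j).bind f) := by
  ext i j
  simp only [Matrix.mul_apply, matOf, Matrix.of_apply]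
  have key : ∀ y : Option (Fin d),
      (∑ x : Fin d, (if f x = some i then 1 else 0) * if y = some x then (1:ℝ) else 0) =
      if y.bind f = some i then 1 else 0 := by
    intro y
    rcases y with _ | k₀
    · simp
    · rw [Finset.sum_eq_single k₀]
      · simp
      · intro b _ hb
        simp [Ne.symm hb]
      · simp
  exact key (g j)

lemma matOf_id {d : ℕ} : matOf (fun j : Fin d => some j) = 1 := by
  ext i j
  simp only [matOf, Matrix.of_apply, Matrix.one_apply]
  by_cases h : j = i <;> simp [h, eq_comm]

lemma permMat_eq {d : ℕ} (σ : Equiv.Perm (Fin d)) :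
    permMat σ = matOf (fun j => some (σ j)) := by
  ext i j; simp [permMat, matOf]

lemma permMat_transpose {d : ℕ} (σ : Equiv.Perm (Fin d)) :
    (permMat σ).transpose = matOf (fun j => some (σ⁻¹ j)) := by
  ext i j
  simp only [Matrix.transpose_apply, permMat, matOf, Matrix.of_apply, Option.some_inj]
  by_cases h : σ i = j
  · rw [if_pos h, if_pos (by rw [← h]; simp)]
  · have h2 : ¬ σ⁻¹ j = i := by
      intro hc; exact h (by rw [← hc]; simp)
    rw [if_neg h, if_neg h2]

lemma trace_matOf {d : ℕ} (f : Fin d → Option (Fin d)) :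
    Matrix.trace (matOf f) = ((Finset.univ.filter (fun i => f i = some i)).card : ℝ) := by
  simp only [Matrix.trace, Matrix.diag, matOf, Matrix.of_apply]
  rw [Finset.sum_ite, Finset.sum_const, Finset.sum_const]
  simp

/-- the chain function: `chainOf g` composes `g (m-1)` first, then … then `g 0`. -/
def chainOf : {m : ℕ} → (Fin m → Fin d' → Option (Fin d')) → Fin d' → Option (Fin d')
  | 0, _, i => some i
  | (m+1), g, i => (chainOf (fun k : Fin m => g k.succ) i).bind (g 0)

lemma matOf_chainOf {d : ℕ} : ∀ {m : ℕ} (f : Fin m → Fin d → Option (Fin d)),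
    (List.ofFn (fun k : Fin m => matOf (f k))).prod = matOf (chainOf f) := by
  intro m
  induction m with
  | zero => intro f; simp [chainOf, matOf_id]
  | succ m ih =>
    intro f
    rw [List.ofFn_succ, List.prod_cons, ih (fun k => f k.succ)]
    rw [matOf_mul]
    rfl

lemma chainOf_eq_some_iff {d : ℕ} : ∀ {m : ℕ} (g : Fin m → Fin d → Option (Fin d)) (i j : Fin d),
    chainOf g i = some j ↔ ∃ w : Fin (m+1) → Fin d, w (Fin.last m) = i ∧ w 0 = j ∧
      ∀ k : Fin m, g k (w k.succ) = some (w k.castSucc) := by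
  intro m
  induction m with
  | zero =>
    intro g i j
    constructor
    · intro h
      refine ⟨fun _ => i, rfl, ?_, fun k => k.elim0⟩
      simpa [chainOf] using h
    · rintro ⟨w, hl, h0, -⟩
      simp only [chainOf]
      rw [show i = w (Fin.last 0) from hl.symm, show (Fin.last 0) = 0 from rfl, h0]
  | succ m ih =>
    intro g i j
    simp only [chainOf, Option.bind_eq_some_iff]
    constructor
    · rintro ⟨t, hc, h0⟩
      obtain ⟨w', hl', h0', hs'⟩ := (ih _ i t).mp hc
      refine ⟨Fin.cons j w', ?_, ?_, ?_⟩
      · rw [← Fin.succ_last, Fin.cons_succ, hl']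
      · simp
      · intro k
        refine Fin.cases ?_ ?_ k
        · have c1 : (0 : Fin (m+1)).castSucc = 0 := rfl
          rw [c1, Fin.cons_succ, Fin.cons_zero, h0', h0]
        · intro a
          have c2 : (a.succ).castSucc = (a.castSucc).succ := (Fin.succ_castSucc a).symm
          rw [c2, Fin.cons_succ, Fin.cons_succ]
          exact hs' a
    · rintro ⟨w, hl, h0, hs⟩
      refine ⟨w ((0 : Fin (m+1)).succ), ?_, ?_⟩
      · refine (ih _ i _).mpr ⟨fun k => w k.succ, ?_, rfl, ?_⟩
        · show w (Fin.last m).succ = i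
          rw [Fin.succ_last]; exact hl
        · intro a
          show g a.succ (w (a.succ).succ) = some (w (a.castSucc).succ)
          have c2 : (a.succ).castSucc = (a.castSucc).succ := (Fin.succ_castSucc a).symm
          rw [← c2]
          exact hs a.succ
      · have := hs 0
        rwa [show (0 : Fin (m+1)).castSucc = 0 from rfl, h0] at this

section Blocks

variable {n d : ℕ}

/-- the k-th block as a partial map, given partial maps `p` and a permutation `σ` -/
def blkOf (p : Fin (2*n) → Fin d → Option (Fin d)) (σ : Equiv.Perm (Fin d)) :
    Fin n → Fin d → Option (Fin d) :=
  fun k i => ((p ⟨2*k.1+1, by have := k.isLt; omega⟩ (σ⁻¹ i)).bind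
      (fun a => some (σ a))).bind (p ⟨2*k.1, by have := k.isLt; omega⟩)

lemma momentProd_eq_matOf (B : Fin (2*n) → Matrix (Fin d) (Fin d) ℝ)
    (p : Fin (2*n) → Fin d → Option (Fin d)) (hB : ∀ j, B j = matOf (p j))
    (σ : Equiv.Perm (Fin d)) :
    momentProd B (permMat σ) = matOf (chainOf (blkOf p σ)) := by
  rw [← matOf_chainOf]
  unfold momentProd
  congr 1
  refine congrArg List.ofFn (funext fun k => ?_)
  rw [hB, hB, permMat_transpose, permMat_eq, matOf_mul, matOf_mul, matOf_mul]
  rfl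

end Blocks

lemma fin_add_one_val {n : ℕ} [NeZero n] (k : Fin n) : (k + 1).val = (k.val + 1) % n := by
  rw [Fin.val_add, Fin.val_one', Nat.add_mod k.val 1 n, Nat.mod_eq_of_lt k.isLt]

set_option maxHeartbeats 1000000 in
lemma exists_SData {n d : ℕ} [NeZero n] (p : Fin (2*n) → Fin d → Option (Fin d))
    (σ : Equiv.Perm (Fin d)) (i : Fin d)
    (h : chainOf (blkOf p σ) i = some i) :
    ∃ Y A : Fin n → Fin d, Y 0 = i ∧ ∀ k : Fin n,
      p ⟨2*(n-1-k.1)+1, by have := k.isLt; omega⟩ (σ⁻¹ (Y k)) = some (A k) ∧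
      p ⟨2*(n-1-k.1), by have := k.isLt; omega⟩ (σ (A k)) = some (Y (k+1)) := by
  have hn : 0 < n := Nat.pos_of_ne_zero (NeZero.ne n)
  obtain ⟨w, hl, h0, hs⟩ := (chainOf_eq_some_iff _ i i).mp h
  refine ⟨fun k => w ⟨n - k.1, Nat.lt_succ_of_le (Nat.sub_le _ _)⟩, ?_⟩
  have key : ∀ k : Fin n, ∃ a,
      p ⟨2*(n-1-k.1)+1, by have := k.isLt; omega⟩
        (σ⁻¹ (w ⟨n - k.1, Nat.lt_succ_of_le (Nat.sub_le _ _)⟩)) = some a ∧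
      p ⟨2*(n-1-k.1), by have := k.isLt; omega⟩ (σ a)
        = some (w ⟨n - (k+1).1, Nat.lt_succ_of_le (Nat.sub_le _ _)⟩) := by
    intro k
    have hk := k.isLt
    have hsj := hs ⟨n-1-k.1, by omega⟩
    simp only [blkOf, Option.bind_eq_some_iff] at hsj
    obtain ⟨y, ⟨a, ha, hya⟩, hev⟩ := hsj
    have hya' : σ a = y := Option.some_inj.mp hya
    have hv : (k+1 : Fin n).val = (k.val + 1) % n := fin_add_one_val k
    have e1 : ((⟨n-1-k.1, by omega⟩ : Fin n).succ : Fin (n+1))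
        = ⟨n - k.1, Nat.lt_succ_of_le (Nat.sub_le _ _)⟩ := by
      apply Fin.ext
      rw [Fin.val_succ]
      show n - 1 - k.1 + 1 = n - k.1
      omega
    have e2 : w (⟨n-1-k.1, by omega⟩ : Fin n).castSucc
        = w ⟨n - (k+1).1, Nat.lt_succ_of_le (Nat.sub_le _ _)⟩ := by
      rcases Nat.lt_or_ge (k.1 + 1) n with hlt | hge
      · have hv' : (k+1 : Fin n).val = k.val + 1 := by rw [hv, Nat.mod_eq_of_lt hlt]
        apply congrArg w
        apply Fin.ext
        rw [Fin.coe_castSucc]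
        show n - 1 - k.1 = n - (k+1 : Fin n).1
        rw [hv']
        omega
      · have hkn : k.1 + 1 = n := by omega
        have hv0 : (k+1 : Fin n).val = 0 := by rw [hv, hkn, Nat.mod_self]
        have ecs : ((⟨n-1-k.1, by omega⟩ : Fin n).castSucc : Fin (n+1)) = 0 := by
          apply Fin.ext
          rw [Fin.coe_castSucc]
          show n - 1 - k.1 = (0 : Fin (n+1)).val
          rw [Fin.val_zero]
          omega
        have ead : (⟨n - (k+1).1, Nat.lt_succ_of_le (Nat.sub_le _ _)⟩ : Fin (n+1))
            = Fin.last n := by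
          apply Fin.ext
          show n - (k+1 : Fin n).1 = n
          rw [hv0, Nat.sub_zero]
        rw [ecs, ead, h0, hl]
    rw [e1] at ha
    rw [e2] at hev
    exact ⟨a, ha, by rw [hya']; exact hev⟩
  choose A hA1 hA2 using key
  refine ⟨A, ?_, fun k => ⟨hA1 k, hA2 k⟩⟩
  have e0 : (⟨n - (0 : Fin n).1, Nat.lt_succ_of_le (Nat.sub_le _ _)⟩ : Fin (n+1))
      = Fin.last n := by
    apply Fin.ext
    show n - (0 : Fin n).1 = n
    rw [Fin.val_zero, Nat.sub_zero]
  exact (congrArg w e0).trans hl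

set_option linter.unusedSectionVars false

section Partitions

variable {V : Type*} [Fintype V] [DecidableEq V]

def relOf (l : List (V × V)) : V → V → Prop := fun a b => (a, b) ∈ l

abbrev eqvOf (l : List (V × V)) : V → V → Prop := Relation.EqvGen (relOf l)

noncomputable def stdOf (l : List (V × V)) : Setoid V := Relation.EqvGen.setoid (relOf l)

noncomputable def nc (l : List (V × V)) : ℕ := Nat.card (Quotient (stdOf l))

lemma eqvOf_le_of_subset {l l' : List (V × V)} (h : ∀ x, x ∈ l → x ∈ l') :
    ∀ a b, eqvOf l a b → eqvOf l' a b := by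
  intro a b hab
  induction hab with
  | rel x y hxy => exact Relation.EqvGen.rel x y (h _ hxy)
  | refl x => exact Relation.EqvGen.refl x
  | symm x y _ ih => exact ih.symm
  | trans x y z _ _ ih1 ih2 => exact ih1.trans _ _ _ ih2

lemma eqvOf_congr {l l' : List (V × V)} (h : ∀ x, x ∈ l ↔ x ∈ l') :
    stdOf l = stdOf l' := by
  apply Setoid.ext
  intro a b
  exact ⟨eqvOf_le_of_subset (fun x hx => (h x).mp hx) a b,
    eqvOf_le_of_subset (fun x hx => (h x).mpr hx) a b⟩

lemma nc_congr {l l' : List (V × V)} (h : ∀ x, x ∈ l ↔ x ∈ l') : nc l = nc l' := by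
  unfold nc
  rw [eqvOf_congr h]

lemma eqv_cons_iff (e : V × V) (l : List (V × V)) (a b : V) :
    eqvOf (e :: l) a b ↔ eqvOf l a b ∨ (eqvOf l a e.1 ∧ eqvOf l e.2 b) ∨
      (eqvOf l a e.2 ∧ eqvOf l e.1 b) := by
  constructor
  · intro h
    induction h with
    | rel x y hxy =>
      rcases List.mem_cons.mp hxy with he | hl
      · have h1 : x = e.1 := by rw [← he]
        have h2 : y = e.2 := by rw [← he]
        subst h1; subst h2
        exact Or.inr (Or.inl ⟨Relation.EqvGen.refl _, Relation.EqvGen.refl _⟩)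
      · exact Or.inl (Relation.EqvGen.rel _ _ hl)
    | refl x => exact Or.inl (Relation.EqvGen.refl x)
    | symm x y _ ih =>
      rcases ih with h | ⟨h1, h2⟩ | ⟨h1, h2⟩
      · exact Or.inl h.symm
      · exact Or.inr (Or.inr ⟨h2.symm, h1.symm⟩)
      · exact Or.inr (Or.inl ⟨h2.symm, h1.symm⟩)
    | trans x y z _ _ ih1 ih2 =>
      rcases ih1 with h | ⟨h1, h2⟩ | ⟨h1, h2⟩ <;>
        rcases ih2 with g | ⟨g1, g2⟩ | ⟨g1, g2⟩
      · exact Or.inl (h.trans _ _ _ g)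
      · exact Or.inr (Or.inl ⟨h.trans _ _ _ g1, g2⟩)
      · exact Or.inr (Or.inr ⟨h.trans _ _ _ g1, g2⟩)
      · exact Or.inr (Or.inl ⟨h1, h2.trans _ _ _ g⟩)
      · exact Or.inr (Or.inl ⟨h1, g2⟩)
      · exact Or.inl (h1.trans _ _ _ g2)
      · exact Or.inr (Or.inr ⟨h1, h2.trans _ _ _ g⟩)
      · exact Or.inl (h1.trans _ _ _ g2)
      · exact Or.inr (Or.inr ⟨h1, g2⟩)
  · intro h
    have hm : ∀ x y, eqvOf l x y → eqvOf (e :: l) x y :=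
      eqvOf_le_of_subset (fun x hx => List.mem_cons_of_mem e hx)
    have he : eqvOf (e :: l) e.1 e.2 := Relation.EqvGen.rel _ _ List.mem_cons_self
    rcases h with h | ⟨h1, h2⟩ | ⟨h1, h2⟩
    · exact hm _ _ h
    · exact ((hm _ _ h1).trans _ _ _ he).trans _ _ _ (hm _ _ h2)
    · exact ((hm _ _ h1).trans _ _ _ he.symm).trans _ _ _ (hm _ _ h2)

noncomputable instance quotFintype (l : List (V × V)) : Fintype (Quotient (stdOf l)) :=
  Fintype.ofFinite _

lemma nc_eq_card (l : List (V × V)) : nc l = Fintype.card (Quotient (stdOf l)) :=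
  Nat.card_eq_fintype_card

/-- the canonical surjection when relations grow -/
noncomputable def qmap (e : V × V) (l : List (V × V)) :
    Quotient (stdOf l) → Quotient (stdOf (e :: l)) :=
  Quotient.map' id (fun a b hab =>
    eqvOf_le_of_subset (fun x hx => List.mem_cons_of_mem e hx) a b hab)

lemma qmap_surj (e : V × V) (l : List (V × V)) : Function.Surjective (qmap e l) := by
  intro q
  induction q using Quotient.inductionOn'
  next a => exact ⟨Quotient.mk'' a, rfl⟩

noncomputable def Fopt (e : V × V) (l : List (V × V)) :
    Quotient (stdOf l) → Option (Quotient (stdOf (e :: l))) := fun q =>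
  if q = Quotient.mk'' e.1 then none else some (qmap e l q)

lemma nc_cons_le_add_one (e : V × V) (l : List (V × V)) : nc l ≤ nc (e :: l) + 1 := by
  classical
  have hinj : Function.Injective (Fopt e l) := by
    intro q1 q2 hq
    by_cases h1 : q1 = Quotient.mk'' e.1 <;> by_cases h2 : q2 = Quotient.mk'' e.1
    · rw [h1, h2]
    · simp only [Fopt, if_pos h1, if_neg h2] at hq; exact absurd hq.symm (by simp)
    · simp only [Fopt, if_neg h1, if_pos h2] at hq; exact absurd hq (by simp)
    · simp only [Fopt, if_neg h1, if_neg h2, Option.some_inj] at hq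
      induction q1 using Quotient.inductionOn'
      induction q2 using Quotient.inductionOn'
      next a b =>
        unfold qmap at hq
        change (Quotient.mk'' a : Quotient (stdOf (e :: l))) = Quotient.mk'' b at hq
        have hab : eqvOf (e :: l) a b := Quotient.exact' hq
        rcases (eqv_cons_iff e l a b).mp hab with h | ⟨g1, g2⟩ | ⟨g1, g2⟩
        · exact Quotient.sound' h
        · exact absurd (Quotient.sound' g1 : Quotient.mk'' a = Quotient.mk'' e.1) h1
        · exact absurd ((Quotient.sound' g2 : Quotient.mk'' e.1 = Quotient.mk'' b)).symm h2
  have := Fintype.card_le_of_injective (Fopt e l) hinj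
  rw [nc_eq_card, nc_eq_card]
  simpa using this

lemma nc_cons_eq_of_rel {e : V × V} {l : List (V × V)} (h : eqvOf l e.1 e.2) :
    nc (e :: l) = nc l := by
  unfold nc
  have : stdOf (e :: l) = stdOf l := by
    apply Setoid.ext
    intro a b
    show eqvOf (e :: l) a b ↔ eqvOf l a b
    rw [eqv_cons_iff]
    constructor
    · rintro (g | ⟨g1, g2⟩ | ⟨g1, g2⟩)
      · exact g
      · exact (g1.trans _ _ _ h).trans _ _ _ g2
      · exact (g1.trans _ _ _ h.symm).trans _ _ _ g2
    · exact fun g => Or.inl g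
  rw [this]

lemma nc_cons_add_one_of_not_rel {e : V × V} {l : List (V × V)} (h : ¬ eqvOf l e.1 e.2) :
    nc (e :: l) + 1 = nc l := by
  have hle := nc_cons_le_add_one e l
  have hlt : nc (e :: l) < nc l := by
    rw [nc_eq_card, nc_eq_card]
    have hsurj := qmap_surj e l
    have hne : Quotient.mk'' e.1 ≠ (Quotient.mk'' e.2 : Quotient (stdOf l)) := by
      intro hc
      exact h (Quotient.exact' hc)
    have heq : qmap e l (Quotient.mk'' e.1) = qmap e l (Quotient.mk'' e.2) := by
      unfold qmap
      change (Quotient.mk'' e.1 : Quotient (stdOf (e :: l))) = Quotient.mk'' e.2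
      exact Quotient.sound' (Relation.EqvGen.rel _ _ List.mem_cons_self)
    rcases lt_or_eq_of_le (Fintype.card_le_of_surjective _ hsurj) with hlt | hEq
    · exact hlt
    · exfalso
      have hbij := (Fintype.bijective_iff_surjective_and_card (qmap e l)).mpr ⟨hsurj, hEq.symm⟩
      exact hne (hbij.injective heq)
  omega

end Partitions

section Core

lemma fin_add_one_val' {n : ℕ} [NeZero n] (k : Fin n) : (k + 1).val = (k.val + 1) % n := by
  rw [Fin.val_add, Fin.val_one', Nat.add_mod k.val 1 n, Nat.mod_eq_of_lt k.isLt]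

variable {n : ℕ} [NeZero n]

abbrev Wt (n : ℕ) := Fin n ⊕ Fin n

/-- D-side structural pairs -/
def LDl (n : ℕ) : List (Wt n × Wt n) := List.ofFn (fun k : Fin n => (Sum.inl k, Sum.inr k))

/-- I-side structural pairs (cyclic) -/
def LIl (n : ℕ) [NeZero n] : List (Wt n × Wt n) :=
  List.ofFn (fun k : Fin n => (Sum.inr k, Sum.inl (k+1)))

/-- pattern identification pairs -/
noncomputable def LCl (c : Wt n → Wt n) : List (Wt n × Wt n) :=
  (Finset.univ : Finset (Wt n)).toList.map (fun w => (w, c w))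

lemma mem_LCl {c : Wt n → Wt n} {x : Wt n × Wt n} : x ∈ LCl c ↔ x.2 = c x.1 := by
  unfold LCl
  constructor
  · intro hx
    rcases List.mem_map.mp hx with ⟨w, _, hw⟩
    rw [← hw]
  · intro hx
    refine List.mem_map.mpr ⟨x.1, ?_, ?_⟩
    · simp [Finset.mem_toList]
    · rw [← hx]

lemma mem_LDl {x : Wt n × Wt n} : x ∈ LDl n ↔ ∃ k : Fin n, x = (Sum.inl k, Sum.inr k) := by
  unfold LDl
  rw [List.mem_ofFn]
  constructor
  · rintro ⟨k, hk⟩; exact ⟨k, hk.symm⟩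
  · rintro ⟨k, hk⟩; exact ⟨k, hk.symm⟩

lemma mem_LIl {x : Wt n × Wt n} : x ∈ LIl n ↔ ∃ k : Fin n, x = (Sum.inr k, Sum.inl (k+1)) := by
  unfold LIl
  rw [List.mem_ofFn]
  constructor
  · rintro ⟨k, hk⟩; exact ⟨k, hk.symm⟩
  · rintro ⟨k, hk⟩; exact ⟨k, hk.symm⟩

lemma eqv_LD (c : Wt n → Wt n) (k : Fin n) :
    eqvOf (LDl n ++ LCl c) (Sum.inl k) (Sum.inr k) :=
  Relation.EqvGen.rel _ _ (List.mem_append_left _ (mem_LDl.mpr ⟨k, rfl⟩))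

lemma eqv_LI (c : Wt n → Wt n) (k : Fin n) :
    eqvOf (LIl n ++ LCl c) (Sum.inr k) (Sum.inl (k+1)) :=
  Relation.EqvGen.rel _ _ (List.mem_append_left _ (mem_LIl.mpr ⟨k, rfl⟩))

/-- connectivity of the union -/
lemma conn_eqv (c : Wt n → Wt n) (w : Wt n) :
    eqvOf (LDl n ++ LIl n ++ LCl c) (Sum.inl (0 : Fin n)) w := by
  have hD : ∀ k : Fin n, eqvOf (LDl n ++ LIl n ++ LCl c) (Sum.inl k) (Sum.inr k) :=
    fun k => Relation.EqvGen.rel _ _ (List.mem_append_left _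
      (List.mem_append_left _ (mem_LDl.mpr ⟨k, rfl⟩)))
  have hI : ∀ k : Fin n, eqvOf (LDl n ++ LIl n ++ LCl c) (Sum.inr k) (Sum.inl (k+1)) :=
    fun k => Relation.EqvGen.rel _ _ (List.mem_append_left _
      (List.mem_append_right _ (mem_LIl.mpr ⟨k, rfl⟩)))
  have reach : ∀ m : ℕ, (hm : m < n) → eqvOf (LDl n ++ LIl n ++ LCl c)
      (Sum.inl (0 : Fin n)) (Sum.inl (⟨m, hm⟩ : Fin n)) := by
    intro m
    induction m with
    | zero =>
      intro hm
      have : (⟨0, hm⟩ : Fin n) = 0 := rfl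
      rw [this]
      exact Relation.EqvGen.refl _
    | succ m ih =>
      intro hm
      have hm' : m < n := by omega
      have e1 : (⟨m, hm'⟩ : Fin n) + 1 = ⟨m+1, hm⟩ := by
        apply Fin.ext
        rw [fin_add_one_val']
        exact Nat.mod_eq_of_lt hm
      have := ((ih hm').trans _ _ _ (hD ⟨m, hm'⟩)).trans _ _ _ (hI ⟨m, hm'⟩)
      rwa [e1] at this
  rcases w with k | k
  · have := reach k.1 k.isLt
    rwa [Fin.eta] at this
  · have := (reach k.1 k.isLt).trans _ _ _ (hD ⟨k.1, k.isLt⟩)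
    rwa [Fin.eta] at this

lemma conn_nc (c : Wt n → Wt n) : nc (LDl n ++ LIl n ++ LCl c) = 1 := by
  rw [nc_eq_card, Fintype.card_eq_one_iff]
  refine ⟨Quotient.mk'' (Sum.inl (0 : Fin n)), fun y => ?_⟩
  induction y using Quotient.inductionOn'
  next w => exact Quotient.sound' (conn_eqv c w).symm

lemma eqv_LC_iff {c : Wt n → Wt n} (hc : ∀ w, c (c w) = c w) (a b : Wt n) :
    eqvOf (LCl c) a b ↔ c a = c b := by
  constructor
  · intro h
    induction h with
    | rel x y hxy =>
      have : y = c x := mem_LCl.mp hxy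
      rw [this, hc]
    | refl x => rfl
    | symm x y _ ih => exact ih.symm
    | trans x y z _ _ ih1 ih2 => exact ih1.trans ih2
  · intro h
    have h1 : eqvOf (LCl c) a (c a) := Relation.EqvGen.rel _ _ (mem_LCl.mpr rfl)
    have h2 : eqvOf (LCl c) b (c b) := Relation.EqvGen.rel _ _ (mem_LCl.mpr rfl)
    rw [← h] at h2
    exact h1.trans _ _ _ h2.symm

lemma nc_LC {c : Wt n → Wt n} (hc : ∀ w, c (c w) = c w) :
    nc (LCl c) = (Finset.univ.image c).card := by
  rw [nc_eq_card, ← Fintype.card_coe]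
  apply Fintype.card_congr
  refine Equiv.ofBijective ((Quotient.lift (fun w => (⟨c w, Finset.mem_image_of_mem c
    (Finset.mem_univ w)⟩ : {x // x ∈ Finset.univ.image c}))
    (fun a b hab => Subtype.ext ((eqv_LC_iff hc a b).mp hab)) :
      Quotient (stdOf (LCl c)) → {x // x ∈ Finset.univ.image c})) ⟨?_, ?_⟩
  · intro q1 q2 hq
    induction q1 using Quotient.inductionOn'
    induction q2 using Quotient.inductionOn'
    next a b =>
      apply Quotient.sound'
      apply (eqv_LC_iff hc a b).mpr
      simpa using hq
  · rintro ⟨v, hv⟩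
    rcases Finset.mem_image.mp hv with ⟨w, _, hw⟩
    refine ⟨Quotient.mk'' w, ?_⟩
    apply Subtype.ext
    simpa using hw

end Core

section Core2

variable {n d : ℕ} [NeZero n]

/-- the pin (domain, image) of each of the `2n` σ-occurrences -/
def pinOf (s : Equiv.Perm (Fin d) × (Fin n → Fin d) × (Fin n → Fin d)) :
    Wt n → Fin d × Fin d := fun w =>
  match w with
  | Sum.inl k => (s.1⁻¹ (s.2.1 k), s.2.1 k)
  | Sum.inr k => (s.2.2 k, s.1 (s.2.2 k))

noncomputable def patOf (s : Equiv.Perm (Fin d) × (Fin n → Fin d) × (Fin n → Fin d))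
    (w : Wt n) : Wt n :=
  finSumFinEquiv.symm
    (((Finset.univ.filter (fun w' => pinOf s w' = pinOf s w)).image finSumFinEquiv).min'
      ⟨finSumFinEquiv w, Finset.mem_image_of_mem _ (Finset.mem_filter.mpr
        ⟨Finset.mem_univ w, rfl⟩)⟩)

lemma pinOf_patOf (s : Equiv.Perm (Fin d) × (Fin n → Fin d) × (Fin n → Fin d)) (w : Wt n) :
    pinOf s (patOf s w) = pinOf s w := by
  unfold patOf
  obtain ⟨w', hw', he⟩ := Finset.mem_image.mp (Finset.min'_mem
    ((Finset.univ.filter (fun w' => pinOf s w' = pinOf s w)).image finSumFinEquiv) _)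
  have he' := congrArg finSumFinEquiv.symm he
  rw [Equiv.symm_apply_apply] at he'
  refine (congrArg (pinOf s) he').symm.trans ?_
  exact (Finset.mem_filter.mp hw').2

lemma patOf_eq_of_pin_eq {s : Equiv.Perm (Fin d) × (Fin n → Fin d) × (Fin n → Fin d)}
    {w w' : Wt n} (h : pinOf s w = pinOf s w') : patOf s w = patOf s w' := by
  have hset : Finset.univ.filter (fun x => pinOf s x = pinOf s w)
      = Finset.univ.filter (fun x => pinOf s x = pinOf s w') := by
    ext x
    simp only [Finset.mem_filter, Finset.mem_univ, true_and, h]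
  unfold patOf
  simp only [hset]

lemma pin_eq_iff_pat_eq {s : Equiv.Perm (Fin d) × (Fin n → Fin d) × (Fin n → Fin d)}
    {w w' : Wt n} : pinOf s w = pinOf s w' ↔ patOf s w = patOf s w' := by
  constructor
  · exact patOf_eq_of_pin_eq
  · intro h
    have h1 := pinOf_patOf s w
    have h2 := pinOf_patOf s w'
    rw [← h1, h, h2]

lemma patOf_idem (s : Equiv.Perm (Fin d) × (Fin n → Fin d) × (Fin n → Fin d)) (w : Wt n) :
    patOf s (patOf s w) = patOf s w :=
  patOf_eq_of_pin_eq (pinOf_patOf s w)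

/-- the cyclic-word condition -/
def Scond (g h : Fin n → Fin d → Option (Fin d))
    (s : Equiv.Perm (Fin d) × (Fin n → Fin d) × (Fin n → Fin d)) : Prop :=
  ∀ k : Fin n, g k (s.1⁻¹ (s.2.1 k)) = some (s.2.2 k) ∧
    h k (s.1 (s.2.2 k)) = some (s.2.1 (k+1))

lemma pin_graph (s : Equiv.Perm (Fin d) × (Fin n → Fin d) × (Fin n → Fin d)) (w : Wt n) :
    s.1 ((pinOf s w).1) = (pinOf s w).2 := by
  rcases w with k | k
  · show s.1 (s.1⁻¹ (s.2.1 k)) = s.2.1 k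
    simp
  · rfl

/-- generic value-determination along an equivalence -/
lemma det_values {L : List (Wt n × Wt n)} {φ₁ φ₂ : Wt n → Fin d}
    (hiff : ∀ a b : Wt n, (a, b) ∈ L → (φ₁ a = φ₂ a ↔ φ₁ b = φ₂ b)) :
    ∀ w w', eqvOf L w w' → (φ₁ w = φ₂ w ↔ φ₁ w' = φ₂ w') := by
  intro w w' h
  induction h with
  | rel x y hxy => exact hiff x y hxy
  | refl x => exact Iff.rfl
  | symm x y _ ih => exact ih.symm
  | trans x y z _ _ ih1 ih2 => exact ih1.trans ih2

noncomputable def rootD (c : Wt n → Wt n) :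
    Quotient (stdOf (LDl n ++ LCl c)) → Wt n := fun q =>
  if hq : ∃ k : Fin n, c (Sum.inl k) = c (Sum.inr k) ∧
      Quotient.mk'' (Sum.inl k) = q then Sum.inl hq.choose else q.out

noncomputable def AllowD (g : Fin n → Fin d → Option (Fin d)) (c : Wt n → Wt n) :
    Quotient (stdOf (LDl n ++ LCl c)) → Finset (Fin d) := fun q =>
  if hq : ∃ k : Fin n, c (Sum.inl k) = c (Sum.inr k) ∧
      Quotient.mk'' (Sum.inl k) = q then
    Finset.univ.filter (fun x => g hq.choose x = some x) else Finset.univ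

noncomputable def rootI (c : Wt n → Wt n) :
    Quotient (stdOf (LIl n ++ LCl c)) → Wt n := fun q =>
  if hq : ∃ k : Fin n, c (Sum.inr k) = c (Sum.inl (k+1)) ∧
      Quotient.mk'' (Sum.inr k) = q then Sum.inr hq.choose else q.out

noncomputable def AllowI (h : Fin n → Fin d → Option (Fin d)) (c : Wt n → Wt n) :
    Quotient (stdOf (LIl n ++ LCl c)) → Finset (Fin d) := fun q =>
  if hq : ∃ k : Fin n, c (Sum.inr k) = c (Sum.inl (k+1)) ∧
      Quotient.mk'' (Sum.inr k) = q then
    Finset.univ.filter (fun x => h hq.choose x = some x) else Finset.univ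

lemma rootD_mk (c : Wt n → Wt n) (q : Quotient (stdOf (LDl n ++ LCl c))) :
    Quotient.mk'' (rootD c q) = q := by
  unfold rootD
  split_ifs with hq
  · exact hq.choose_spec.2
  · rw [Quotient.mk''_eq_mk, Quotient.out_eq]

lemma rootI_mk (c : Wt n → Wt n) (q : Quotient (stdOf (LIl n ++ LCl c))) :
    Quotient.mk'' (rootI c q) = q := by
  unfold rootI
  split_ifs with hq
  · exact hq.choose_spec.2
  · rw [Quotient.mk''_eq_mk, Quotient.out_eq]

end Core2

section Core3

variable {n d : ℕ} [NeZero n]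

lemma fiberD_one_degenerate (c : Wt n → Wt n)
    (q : Quotient (stdOf (LDl n ++ LCl c)))
    (hone : ((Finset.univ.image c).filter (fun ρ => Quotient.mk'' ρ = q)).card ≤ 1) :
    ∃ k : Fin n, c (Sum.inl k) = c (Sum.inr k) := by
  classical
  have hLC : ∀ w : Wt n, Quotient.mk'' (c w) = (Quotient.mk'' w :
      Quotient (stdOf (LDl n ++ LCl c))) :=
    fun w => (Quotient.sound' (Relation.EqvGen.rel _ _
      (List.mem_append_right _ (mem_LCl.mpr rfl)))).symm
  have hLD : ∀ k : Fin n, Quotient.mk'' (Sum.inl k : Wt n) = (Quotient.mk'' (Sum.inr k) :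
      Quotient (stdOf (LDl n ++ LCl c))) :=
    fun k => Quotient.sound' (Relation.EqvGen.rel _ _
      (List.mem_append_left _ (mem_LDl.mpr ⟨k, rfl⟩)))
  -- the fiber contains c w₀ where w₀ := q.out
  have hmem : c q.out ∈ (Finset.univ.image c).filter (fun ρ => Quotient.mk'' ρ = q) := by
    refine Finset.mem_filter.mpr ⟨Finset.mem_image_of_mem c (Finset.mem_univ _), ?_⟩
    rw [hLC, Quotient.mk''_eq_mk, Quotient.out_eq]
  obtain ⟨w₀, -, hw₀⟩ := Finset.mem_image.mp (Finset.mem_filter.mp hmem).1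
  rcases hw : w₀ with k | k
  · refine ⟨k, ?_⟩
    have hmem2 : c (Sum.inr k) ∈ (Finset.univ.image c).filter
        (fun ρ => Quotient.mk'' ρ = q) := by
      refine Finset.mem_filter.mpr ⟨Finset.mem_image_of_mem c (Finset.mem_univ _), ?_⟩
      rw [hLC, ← hLD, ← hw, ← hLC w₀, hw₀]
      exact (Finset.mem_filter.mp hmem).2
    have := Finset.card_le_one.mp hone _ hmem2 _ hmem
    rw [← hw, hw₀]
    exact this.symm
  · refine ⟨k, ?_⟩
    have hmem2 : c (Sum.inl k) ∈ (Finset.univ.image c).filter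
        (fun ρ => Quotient.mk'' ρ = q) := by
      refine Finset.mem_filter.mpr ⟨Finset.mem_image_of_mem c (Finset.mem_univ _), ?_⟩
      rw [hLC, hLD, ← hw, ← hLC w₀, hw₀]
      exact (Finset.mem_filter.mp hmem).2
    have := Finset.card_le_one.mp hone _ hmem2 _ hmem
    rw [← hw, hw₀]
    exact this

lemma fiberI_one_degenerate (c : Wt n → Wt n)
    (q : Quotient (stdOf (LIl n ++ LCl c)))
    (hone : ((Finset.univ.image c).filter (fun ρ => Quotient.mk'' ρ = q)).card ≤ 1) :
    ∃ k : Fin n, c (Sum.inr k) = c (Sum.inl (k+1)) := by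
  classical
  have hLC : ∀ w : Wt n, Quotient.mk'' (c w) = (Quotient.mk'' w :
      Quotient (stdOf (LIl n ++ LCl c))) :=
    fun w => (Quotient.sound' (Relation.EqvGen.rel _ _
      (List.mem_append_right _ (mem_LCl.mpr rfl)))).symm
  have hLI : ∀ k : Fin n, Quotient.mk'' (Sum.inr k : Wt n) = (Quotient.mk'' (Sum.inl (k+1)) :
      Quotient (stdOf (LIl n ++ LCl c))) :=
    fun k => Quotient.sound' (Relation.EqvGen.rel _ _
      (List.mem_append_left _ (mem_LIl.mpr ⟨k, rfl⟩)))
  have hmem : c q.out ∈ (Finset.univ.image c).filter (fun ρ => Quotient.mk'' ρ = q) := by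
    refine Finset.mem_filter.mpr ⟨Finset.mem_image_of_mem c (Finset.mem_univ _), ?_⟩
    rw [hLC, Quotient.mk''_eq_mk, Quotient.out_eq]
  obtain ⟨w₀, -, hw₀⟩ := Finset.mem_image.mp (Finset.mem_filter.mp hmem).1
  rcases hw : w₀ with k | k
  · -- w₀ = inl k; use the I-pair (inr (k-1), inl k)
    refine ⟨k - 1, ?_⟩
    have hk1 : (k - 1) + 1 = k := by
      exact sub_add_cancel k 1
    have hmem2 : c (Sum.inr (k-1)) ∈ (Finset.univ.image c).filter
        (fun ρ => Quotient.mk'' ρ = q) := by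
      refine Finset.mem_filter.mpr ⟨Finset.mem_image_of_mem c (Finset.mem_univ _), ?_⟩
      rw [hLC, hLI, hk1, ← hw, ← hLC w₀, hw₀]
      exact (Finset.mem_filter.mp hmem).2
    have := Finset.card_le_one.mp hone _ hmem2 _ hmem
    rw [hk1, ← hw, hw₀]
    exact this
  · refine ⟨k, ?_⟩
    have hmem2 : c (Sum.inl (k+1)) ∈ (Finset.univ.image c).filter
        (fun ρ => Quotient.mk'' ρ = q) := by
      refine Finset.mem_filter.mpr ⟨Finset.mem_image_of_mem c (Finset.mem_univ _), ?_⟩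
      rw [hLC, ← hLI, ← hw, ← hLC w₀, hw₀]
      exact (Finset.mem_filter.mp hmem).2
    have := Finset.card_le_one.mp hone _ hmem _ hmem2
    rw [← hw, hw₀]
    exact this

/-- G2: if the two quotients have together `A+1` classes, a degenerate pair exists -/
lemma G2 (c : Wt n → Wt n)
    (hKA : Fintype.card (Quotient (stdOf (LDl n ++ LCl c)))
        + Fintype.card (Quotient (stdOf (LIl n ++ LCl c)))
        = (Finset.univ.image c).card + 1) :
    (∃ k : Fin n, c (Sum.inl k) = c (Sum.inr k)) ∨
      (∃ k : Fin n, c (Sum.inr k) = c (Sum.inl (k+1))) := by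
  classical
  by_contra hcon
  push_neg at hcon
  obtain ⟨hD, hI⟩ := hcon
  have hsumD : (Finset.univ.image c).card = ∑ q : Quotient (stdOf (LDl n ++ LCl c)),
      ((Finset.univ.image c).filter (fun ρ => Quotient.mk'' ρ = q)).card :=
    Finset.card_eq_sum_card_fiberwise (fun x _ => Finset.mem_univ _)
  have hsumI : (Finset.univ.image c).card = ∑ q : Quotient (stdOf (LIl n ++ LCl c)),
      ((Finset.univ.image c).filter (fun ρ => Quotient.mk'' ρ = q)).card :=
    Finset.card_eq_sum_card_fiberwise (fun x _ => Finset.mem_univ _)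
  have hD2 : ∀ q : Quotient (stdOf (LDl n ++ LCl c)),
      2 ≤ ((Finset.univ.image c).filter (fun ρ => Quotient.mk'' ρ = q)).card := by
    intro q
    by_contra hq
    push_neg at hq
    obtain ⟨k, hk⟩ := fiberD_one_degenerate c q (by omega)
    exact (hD k) hk
  have hI2 : ∀ q : Quotient (stdOf (LIl n ++ LCl c)),
      2 ≤ ((Finset.univ.image c).filter (fun ρ => Quotient.mk'' ρ = q)).card := by
    intro q
    by_contra hq
    push_neg at hq
    obtain ⟨k, hk⟩ := fiberI_one_degenerate c q (by omega)
    exact (hI k) hk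
  have hge1 : (Finset.univ.image c).card ≥ 2 * Fintype.card (Quotient (stdOf (LDl n ++ LCl c))) := by
    rw [hsumD]
    calc ∑ q : Quotient (stdOf (LDl n ++ LCl c)),
        ((Finset.univ.image c).filter (fun ρ => Quotient.mk'' ρ = q)).card
        ≥ ∑ _q : Quotient (stdOf (LDl n ++ LCl c)), 2 :=
          Finset.sum_le_sum (fun q _ => hD2 q)
      _ = 2 * Fintype.card (Quotient (stdOf (LDl n ++ LCl c))) := by
          rw [Finset.sum_const, Finset.card_univ]; ring
  have hge2 : (Finset.univ.image c).card ≥ 2 * Fintype.card (Quotient (stdOf (LIl n ++ LCl c))) := by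
    rw [hsumI]
    calc ∑ q : Quotient (stdOf (LIl n ++ LCl c)),
        ((Finset.univ.image c).filter (fun ρ => Quotient.mk'' ρ = q)).card
        ≥ ∑ _q : Quotient (stdOf (LIl n ++ LCl c)), 2 :=
          Finset.sum_le_sum (fun q _ => hI2 q)
      _ = 2 * Fintype.card (Quotient (stdOf (LIl n ++ LCl c))) := by
          rw [Finset.sum_const, Finset.card_univ]; ring
  omega

end Core3

section Subadd

variable {V : Type*} [Fintype V] [DecidableEq V]

lemma nc_union_lower (L1 L0 : List (V × V)) :
    ∀ L2 : List (V × V), nc (L1 ++ L2 ++ L0) + nc L0 ≥ nc (L1 ++ L0) + nc (L2 ++ L0) := by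
  intro L2
  induction L2 with
  | nil =>
    have h1 : nc (L1 ++ [] ++ L0) = nc (L1 ++ L0) := nc_congr (by intro x; simp)
    have h2 : nc (([] : List (V × V)) ++ L0) = nc L0 := nc_congr (by intro x; simp)
    omega
  | cons e t ih =>
    have hc1 : nc (L1 ++ (e :: t) ++ L0) = nc (e :: (L1 ++ t ++ L0)) :=
      nc_congr (by intro x; simp; tauto)
    have hc2 : nc ((e :: t) ++ L0) = nc (e :: (t ++ L0)) :=
      nc_congr (by intro x; simp)
    rw [hc1, hc2]
    by_cases hrel : eqvOf (t ++ L0) e.1 e.2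
    · have hrel' : eqvOf (L1 ++ t ++ L0) e.1 e.2 :=
        eqvOf_le_of_subset (by intro x hx; simp at hx ⊢; tauto) _ _ hrel
      rw [nc_cons_eq_of_rel hrel, nc_cons_eq_of_rel hrel']
      exact ih
    · have he2 := nc_cons_add_one_of_not_rel hrel
      have he1 : nc (e :: (L1 ++ t ++ L0)) + 1 ≥ nc (L1 ++ t ++ L0) :=
        nc_cons_le_add_one e _
      omega

end Subadd

section Count

variable {n d F : ℕ} [NeZero n]
variable {g h : Fin n → Fin d → Option (Fin d)}

lemma RA_D {c : Wt n → Wt n} {s : Equiv.Perm (Fin d) × (Fin n → Fin d) × (Fin n → Fin d)}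
    (hs : Scond g h s) (hpat : patOf s = c) (q : Quotient (stdOf (LDl n ++ LCl c))) :
    (pinOf s (rootD c q)).1 ∈ AllowD g c q := by
  unfold rootD AllowD
  split_ifs with hq
  · refine Finset.mem_filter.mpr ⟨Finset.mem_univ _, ?_⟩
    have hpin : pinOf s (Sum.inl hq.choose) = pinOf s (Sum.inr hq.choose) := by
      apply pin_eq_iff_pat_eq.mpr
      rw [hpat]
      exact hq.choose_spec.1
    have hrel : g hq.choose ((pinOf s (Sum.inl hq.choose)).1)
        = some ((pinOf s (Sum.inr hq.choose)).1) := (hs hq.choose).1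
    rw [← hpin] at hrel
    exact hrel
  · exact Finset.mem_univ _

lemma RA_I {c : Wt n → Wt n} {s : Equiv.Perm (Fin d) × (Fin n → Fin d) × (Fin n → Fin d)}
    (hs : Scond g h s) (hpat : patOf s = c) (q : Quotient (stdOf (LIl n ++ LCl c))) :
    (pinOf s (rootI c q)).2 ∈ AllowI h c q := by
  unfold rootI AllowI
  split_ifs with hq
  · refine Finset.mem_filter.mpr ⟨Finset.mem_univ _, ?_⟩
    have hpin : pinOf s (Sum.inr hq.choose) = pinOf s (Sum.inl (hq.choose + 1)) := by
      apply pin_eq_iff_pat_eq.mpr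
      rw [hpat]
      exact hq.choose_spec.1
    have hrel : h hq.choose ((pinOf s (Sum.inr hq.choose)).2)
        = some ((pinOf s (Sum.inl (hq.choose + 1))).2) := (hs hq.choose).2
    rw [← hpin] at hrel
    exact hrel
  · exact Finset.mem_univ _

lemma AllowD_card_le (hgF : ∀ k, (Finset.univ.filter (fun x => g k x = some x)).card ≤ F)
    (c : Wt n → Wt n) (q : Quotient (stdOf (LDl n ++ LCl c))) :
    (AllowD g c q).card ≤ if (∃ k : Fin n, c (Sum.inl k) = c (Sum.inr k) ∧
      Quotient.mk'' (Sum.inl k) = q) then F else d := by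
  unfold AllowD
  split_ifs with hq
  · exact hgF _
  · rw [Finset.card_univ, Fintype.card_fin]

lemma AllowI_card_le (hhF : ∀ k, (Finset.univ.filter (fun x => h k x = some x)).card ≤ F)
    (c : Wt n → Wt n) (q : Quotient (stdOf (LIl n ++ LCl c))) :
    (AllowI h c q).card ≤ if (∃ k : Fin n, c (Sum.inr k) = c (Sum.inl (k+1)) ∧
      Quotient.mk'' (Sum.inr k) = q) then F else d := by
  unfold AllowI
  split_ifs with hq
  · exact hhF _
  · rw [Finset.card_univ, Fintype.card_fin]

lemma G1 (c : Wt n → Wt n) (hc : ∀ w, c (c w) = c w) :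
    Fintype.card (Quotient (stdOf (LDl n ++ LCl c)))
      + Fintype.card (Quotient (stdOf (LIl n ++ LCl c)))
      ≤ (Finset.univ.image c).card + 1 := by
  have hlow := nc_union_lower (LDl n) (LCl c) (LIl n)
  rw [conn_nc c] at hlow
  have h1 := nc_eq_card (LDl n ++ LCl c)
  have h2 := nc_eq_card (LIl n ++ LCl c)
  have h3 := nc_LC hc
  omega

/-- the fiber bound: all elements with equal pattern and equal root values differ
only by a permutation fixed on the pin set -/
lemma fiber_bound
    (hginj : ∀ k a b x, g k a = some x → g k b = some x → a = b)
    (hhinj : ∀ k a b x, h k a = some x → h k b = some x → a = b)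
    (c : Wt n → Wt n)
    (t1 : Quotient (stdOf (LDl n ++ LCl c)) → Fin d)
    (t2 : Quotient (stdOf (LIl n ++ LCl c)) → Fin d)
    (T : Finset (Equiv.Perm (Fin d) × (Fin n → Fin d) × (Fin n → Fin d)))
    (hT : ∀ s ∈ T, Scond g h s ∧ patOf s = c ∧
      (∀ q, (pinOf s (rootD c q)).1 = t1 q) ∧ (∀ q, (pinOf s (rootI c q)).2 = t2 q)) :
    T.card ≤ (d - (Finset.univ.image c).card)! := by
  classical
  rcases T.eq_empty_or_nonempty with rfl | ⟨s₀, hs₀⟩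
  · simp
  obtain ⟨hs₀c, hs₀p, hs₀1, hs₀2⟩ := hT s₀ hs₀
  have hc : ∀ w, c (c w) = c w := by
    intro w
    rw [← hs₀p]
    exact patOf_idem s₀ w
  -- all pins agree with s₀'s pins
  have pin_all : ∀ s ∈ T, pinOf s = pinOf s₀ := by
    intro s hs
    obtain ⟨hsc, hsp, hst1, hst2⟩ := hT s hs
    have hdom : ∀ w, (pinOf s w).1 = (pinOf s₀ w).1 := by
      have hiff : ∀ a b : Wt n, (a, b) ∈ LDl n ++ LCl c →
          ((pinOf s a).1 = (pinOf s₀ a).1 ↔ (pinOf s b).1 = (pinOf s₀ b).1) := by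
        intro a b hab
        rcases List.mem_append.mp hab with hD | hC
        · obtain ⟨k, hk⟩ := mem_LDl.mp hD
          have ha : a = Sum.inl k := congrArg Prod.fst hk
          have hb : b = Sum.inr k := congrArg Prod.snd hk
          subst ha; subst hb
          have r1 : g k ((pinOf s (Sum.inl k)).1) = some ((pinOf s (Sum.inr k)).1) :=
            (hsc k).1
          have r2 : g k ((pinOf s₀ (Sum.inl k)).1) = some ((pinOf s₀ (Sum.inr k)).1) :=
            (hs₀c k).1
          constructor
          · intro he
            rw [he, r2] at r1
            exact Option.some_inj.mp r1.symm
          · intro he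
            rw [he] at r1
            exact hginj k _ _ _ r1 r2
        · have hbc : b = c a := mem_LCl.mp hC
          subst hbc
          have e1 : pinOf s (c a) = pinOf s a := by
            rw [← hsp]; exact pinOf_patOf s a
          have e2 : pinOf s₀ (c a) = pinOf s₀ a := by
            rw [← hs₀p]; exact pinOf_patOf s₀ a
          rw [e1, e2]
      intro w
      have hroot : eqvOf (LDl n ++ LCl c) (rootD c (Quotient.mk'' w)) w :=
        Quotient.exact' (rootD_mk c (Quotient.mk'' w))
      have hragree : (pinOf s (rootD c (Quotient.mk'' w))).1
          = (pinOf s₀ (rootD c (Quotient.mk'' w))).1 := by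
        rw [hst1, hs₀1]
      exact (det_values hiff _ _ hroot).mp hragree
    have him : ∀ w, (pinOf s w).2 = (pinOf s₀ w).2 := by
      have hiff : ∀ a b : Wt n, (a, b) ∈ LIl n ++ LCl c →
          ((pinOf s a).2 = (pinOf s₀ a).2 ↔ (pinOf s b).2 = (pinOf s₀ b).2) := by
        intro a b hab
        rcases List.mem_append.mp hab with hI | hC
        · obtain ⟨k, hk⟩ := mem_LIl.mp hI
          have ha : a = Sum.inr k := congrArg Prod.fst hk
          have hb : b = Sum.inl (k+1) := congrArg Prod.snd hk
          subst ha; subst hb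
          have r1 : h k ((pinOf s (Sum.inr k)).2) = some ((pinOf s (Sum.inl (k+1))).2) :=
            (hsc k).2
          have r2 : h k ((pinOf s₀ (Sum.inr k)).2) = some ((pinOf s₀ (Sum.inl (k+1))).2) :=
            (hs₀c k).2
          constructor
          · intro he
            rw [he, r2] at r1
            exact Option.some_inj.mp r1.symm
          · intro he
            rw [he] at r1
            exact hhinj k _ _ _ r1 r2
        · have hbc : b = c a := mem_LCl.mp hC
          subst hbc
          have e1 : pinOf s (c a) = pinOf s a := by
            rw [← hsp]; exact pinOf_patOf s a
          have e2 : pinOf s₀ (c a) = pinOf s₀ a := by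
            rw [← hs₀p]; exact pinOf_patOf s₀ a
          rw [e1, e2]
      intro w
      have hroot : eqvOf (LIl n ++ LCl c) (rootI c (Quotient.mk'' w)) w :=
        Quotient.exact' (rootI_mk c (Quotient.mk'' w))
      have hragree : (pinOf s (rootI c (Quotient.mk'' w))).2
          = (pinOf s₀ (rootI c (Quotient.mk'' w))).2 := by
        rw [hst2, hs₀2]
      exact (det_values hiff _ _ hroot).mp hragree
    funext w
    exact Prod.ext (hdom w) (him w)
  -- notation
  set dv : Wt n → Fin d := fun w => (pinOf s₀ w).1 with hdv
  set iv : Wt n → Fin d := fun w => (pinOf s₀ w).2 with hiv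
  have hgraph : ∀ s ∈ T, ∀ w, s.1 (dv w) = iv w := by
    intro s hs w
    have := pin_graph s w
    rw [pin_all s hs] at this
    exact this
  have hgraph0 : ∀ w, s₀.1 (dv w) = iv w := hgraph s₀ hs₀
  -- second coordinates are determined
  have hsnd : ∀ s ∈ T, s.2 = s₀.2 := by
    intro s hs
    have hp := pin_all s hs
    refine Prod.ext (funext fun k => ?_) (funext fun k => ?_)
    · show (pinOf s (Sum.inl k)).2 = (pinOf s₀ (Sum.inl k)).2
      rw [hp]
    · show (pinOf s (Sum.inr k)).1 = (pinOf s₀ (Sum.inr k)).1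
      rw [hp]
  set Dset : Finset (Fin d) := Finset.univ.image dv with hDset
  set Tset : Finset (Fin d) := Finset.univ.image iv with hTset
  -- dv w = dv w' ↔ c w = c w'
  have hdvc : ∀ w w', dv w = dv w' ↔ c w = c w' := by
    intro w w'
    constructor
    · intro he
      have hivv : iv w = iv w' := by
        rw [← hgraph0 w, ← hgraph0 w', he]
      have hpin : pinOf s₀ w = pinOf s₀ w' := Prod.ext he hivv
      have := pin_eq_iff_pat_eq.mp hpin
      rwa [hs₀p] at this
    · intro he
      have : patOf s₀ w = patOf s₀ w' := by rw [hs₀p]; exact he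
      have hpin := pin_eq_iff_pat_eq.mpr this
      exact congrArg Prod.fst hpin
  have hivv' : ∀ w w', iv w = iv w' ↔ dv w = dv w' := by
    intro w w'
    rw [← hgraph0 w, ← hgraph0 w']
    exact ⟨fun he => s₀.1.injective he, fun he => by rw [he]⟩
  -- cardinalities
  have hDcard : Dset.card = (Finset.univ.image c).card := by
    symm
    apply Finset.card_bij (fun ρ _ => dv ρ)
    · intro ρ hρ
      exact Finset.mem_image_of_mem dv (Finset.mem_univ ρ)
    · intro ρ hρ ρ' hρ' he
      obtain ⟨w, -, hw⟩ := Finset.mem_image.mp hρ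
      obtain ⟨w', -, hw'⟩ := Finset.mem_image.mp hρ'
      have hcc := (hdvc ρ ρ').mp he
      have hρρ : c ρ = ρ := by rw [← hw, hc]
      have hρρ' : c ρ' = ρ' := by rw [← hw', hc]
      rw [← hρρ, ← hρρ', hcc]
    · intro x hx
      obtain ⟨w, -, hw⟩ := Finset.mem_image.mp hx
      refine ⟨c w, Finset.mem_image_of_mem c (Finset.mem_univ w), ?_⟩
      rw [← hw]
      exact (hdvc (c w) w).mpr (hc w)
  have hTcard : Tset.card = (Finset.univ.image c).card := by
    symm
    apply Finset.card_bij (fun ρ _ => iv ρ)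
    · intro ρ hρ
      exact Finset.mem_image_of_mem iv (Finset.mem_univ ρ)
    · intro ρ hρ ρ' hρ' he
      obtain ⟨w, -, hw⟩ := Finset.mem_image.mp hρ
      obtain ⟨w', -, hw'⟩ := Finset.mem_image.mp hρ'
      have hcc := (hdvc ρ ρ').mp ((hivv' ρ ρ').mp he)
      have hρρ : c ρ = ρ := by rw [← hw, hc]
      have hρρ' : c ρ' = ρ' := by rw [← hw', hc]
      rw [← hρρ, ← hρρ', hcc]
    · intro x hx
      obtain ⟨w, -, hw⟩ := Finset.mem_image.mp hx
      refine ⟨c w, Finset.mem_image_of_mem c (Finset.mem_univ w), ?_⟩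
      rw [← hw]
      exact (hivv' (c w) w).mpr ((hdvc (c w) w).mpr (hc w))
  -- the injection into embeddings of complements
  have hmapsout : ∀ s ∈ T, ∀ x : Fin d, x ∉ Dset → s.1 x ∉ Tset := by
    intro s hs x hx hmem
    obtain ⟨w, -, hw⟩ := Finset.mem_image.mp hmem
    have : s.1 (dv w) = s.1 x := by rw [hgraph s hs w, hw]
    exact hx (by rw [← s.1.injective this]; exact Finset.mem_image_of_mem dv (Finset.mem_univ w))
  have hinj2 : ∀ s ∈ T, ∀ s' ∈ T,
      (∀ x : Fin d, x ∉ Dset → s.1 x = s'.1 x) → s = s' := by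
    intro s hs s' hs' hagree
    have h1 : s.1 = s'.1 := by
      apply Equiv.ext
      intro x
      by_cases hx : x ∈ Dset
      · obtain ⟨w, -, hw⟩ := Finset.mem_image.mp hx
        rw [← hw, hgraph s hs w, hgraph s' hs' w]
      · exact hagree x hx
    have h2 : s.2 = s'.2 := by rw [hsnd s hs, hsnd s' hs']
    exact Prod.ext h1 h2
  -- count
  have hcard : T.card ≤ Fintype.card ((↥(Dsetᶜ)) ↪ (↥(Tsetᶜ))) := by
    have hΦmem : ∀ s ∈ T, ∀ x : ↥(Dsetᶜ), s.1 x.1 ∈ Tsetᶜ := by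
      intro s hs x
      rw [Finset.mem_compl]
      exact hmapsout s hs x.1 (Finset.mem_compl.mp x.2)
    classical
    refine Finset.card_le_card_of_injOn
      (fun s => if hs : s ∈ T then
        (⟨fun x => ⟨s.1 x.1, hΦmem s hs x⟩, by
          intro x y hxy
          apply Subtype.ext
          exact s.1.injective (Subtype.ext_iff.mp hxy)⟩ : (↥(Dsetᶜ)) ↪ (↥(Tsetᶜ)))
        else (⟨fun x => ⟨s₀.1 x.1, hΦmem s₀ hs₀ x⟩, by
          intro x y hxy
          apply Subtype.ext
          exact s₀.1.injective (Subtype.ext_iff.mp hxy)⟩ : (↥(Dsetᶜ)) ↪ (↥(Tsetᶜ))))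
      (fun _ _ => Finset.mem_univ _) ?_
    · intro s hsT s' hsT' he
      simp only [Finset.mem_coe] at hsT hsT'
      simp only [dif_pos hsT, dif_pos hsT'] at he
      apply hinj2 s hsT s' hsT'
      intro x hx
      have := congrFun (congrArg (fun e => e.toFun) he) ⟨x, Finset.mem_compl.mpr hx⟩
      exact Subtype.ext_iff.mp this
  have hembcard : Fintype.card ((↥(Dsetᶜ)) ↪ (↥(Tsetᶜ)))
      = (d - (Finset.univ.image c).card)! := by
    rw [Fintype.card_embedding_eq]
    rw [Fintype.card_coe, Fintype.card_coe]
    rw [Finset.card_compl, Finset.card_compl, Fintype.card_fin, hDcard, hTcard]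
    exact Nat.descFactorial_self _
  calc T.card ≤ _ := hcard
    _ = _ := hembcard

end Count

section Assembly

variable {n d F : ℕ} [NeZero n]
variable {g h : Fin n → Fin d → Option (Fin d)}

lemma arith_final {F d A KD KI aD aI bD bI : ℕ} (hd : 0 < d) (hFd : F ≤ d)
    (hDk : aD + bD = KD) (hIk : aI + bI = KI) (hK : KD + KI ≤ A + 1)
    (hfix : KD + KI = A + 1 → 1 ≤ aD + aI) :
    F ^ aD * d ^ bD * (F ^ aI * d ^ bI) ≤ (F + 1) * d ^ A := by
  have hmul : F ^ aD * d ^ bD * (F ^ aI * d ^ bI) = F ^ (aD + aI) * d ^ (bD + bI) := by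
    rw [pow_add, pow_add]; ring
  rw [hmul]
  rcases Nat.eq_zero_or_pos (aD + aI) with ha0 | hapos
  · rw [ha0, pow_zero, one_mul]
    have hb : bD + bI ≤ A := by omega
    calc d ^ (bD + bI) ≤ d ^ A := Nat.pow_le_pow_right hd hb
      _ ≤ (F + 1) * d ^ A := Nat.le_mul_of_pos_left _ (by omega)
  · have h1 : F ^ (aD + aI) ≤ F * d ^ (aD + aI - 1) := by
      calc F ^ (aD + aI) = F * F ^ (aD + aI - 1) := by
            rw [← pow_succ']
            congr 1
            omega
        _ ≤ F * d ^ (aD + aI - 1) := Nat.mul_le_mul_left _ (Nat.pow_le_pow_left hFd _)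
    calc F ^ (aD + aI) * d ^ (bD + bI)
        ≤ (F * d ^ (aD + aI - 1)) * d ^ (bD + bI) := Nat.mul_le_mul_right _ h1
      _ = F * d ^ (aD + aI - 1 + (bD + bI)) := by rw [mul_assoc, ← pow_add]
      _ ≤ F * d ^ A := Nat.mul_le_mul_left _ (Nat.pow_le_pow_right hd (by omega))
      _ ≤ (F + 1) * d ^ A := Nat.mul_le_mul_right _ (by omega)

lemma card_pattern_le
    (hginj : ∀ k a b x, g k a = some x → g k b = some x → a = b)
    (hhinj : ∀ k a b x, h k a = some x → h k b = some x → a = b)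
    (hgF : ∀ k, (Finset.univ.filter (fun x => g k x = some x)).card ≤ F)
    (hhF : ∀ k, (Finset.univ.filter (fun x => h k x = some x)).card ≤ F)
    (hd : 0 < d) (hFd : F ≤ d) (c : Wt n → Wt n) :
    (Finset.univ.filter (fun s : Equiv.Perm (Fin d) × (Fin n → Fin d) × (Fin n → Fin d) =>
        Scond g h s ∧ patOf s = c)).card
      ≤ (F + 1) * d ^ ((Finset.univ.image c).card)
        * (d - (Finset.univ.image c).card)! := by
  classical
  set Sc := Finset.univ.filter (fun s : Equiv.Perm (Fin d) × (Fin n → Fin d) ×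
    (Fin n → Fin d) => Scond g h s ∧ patOf s = c) with hSc
  rcases Sc.eq_empty_or_nonempty with hem | ⟨s₀, hs₀mem⟩
  · rw [hem]; simp
  have hs₀ := Finset.mem_filter.mp hs₀mem
  have hc : ∀ w, c (c w) = c w := by
    intro w
    rw [← hs₀.2.2]
    exact patOf_idem s₀ w
  set A := (Finset.univ.image c).card with hA
  -- fiberwise over root values
  set Rmap : Equiv.Perm (Fin d) × (Fin n → Fin d) × (Fin n → Fin d) →
      (Quotient (stdOf (LDl n ++ LCl c)) → Fin d) ×
      (Quotient (stdOf (LIl n ++ LCl c)) → Fin d) :=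
    fun s => (fun q => (pinOf s (rootD c q)).1, fun q => (pinOf s (rootI c q)).2) with hRmap
  set TF := (Fintype.piFinset (fun q => AllowD g c q)) ×ˢ
    (Fintype.piFinset (fun q => AllowI h c q)) with hTF
  have hmem : ∀ s ∈ Sc, Rmap s ∈ TF := by
    intro s hs
    have hsf := Finset.mem_filter.mp hs
    refine Finset.mem_product.mpr ⟨?_, ?_⟩
    · refine Fintype.mem_piFinset.mpr (fun q => ?_)
      exact RA_D hsf.2.1 hsf.2.2 q
    · refine Fintype.mem_piFinset.mpr (fun q => ?_)
      exact RA_I hsf.2.1 hsf.2.2 q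
  have step1 : Sc.card = ∑ t ∈ TF, (Sc.filter (fun s => Rmap s = t)).card :=
    Finset.card_eq_sum_card_fiberwise hmem
  have step2 : ∀ t ∈ TF, (Sc.filter (fun s => Rmap s = t)).card ≤ (d - A)! := by
    intro t _
    apply fiber_bound hginj hhinj c t.1 t.2
    intro s hs
    have h1 := Finset.mem_filter.mp hs
    have h2 := Finset.mem_filter.mp h1.1
    refine ⟨h2.2.1, h2.2.2, ?_, ?_⟩
    · intro q
      exact congrFun (congrArg Prod.fst h1.2) q
    · intro q
      exact congrFun (congrArg Prod.snd h1.2) q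
  have step3 : Sc.card ≤ TF.card * (d - A)! := by
    rw [step1]
    calc ∑ t ∈ TF, (Sc.filter (fun s => Rmap s = t)).card
        ≤ ∑ _t ∈ TF, (d - A)! := Finset.sum_le_sum step2
      _ = TF.card * (d - A)! := by rw [Finset.sum_const, smul_eq_mul]
  -- bound TF.card
  have hTFcard : TF.card ≤ (F + 1) * d ^ A := by
    rw [hTF, Finset.card_product, Fintype.card_piFinset, Fintype.card_piFinset]
    have hD : ∏ q : Quotient (stdOf (LDl n ++ LCl c)), (AllowD g c q).card
        ≤ ∏ q : Quotient (stdOf (LDl n ++ LCl c)),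
          (if (∃ k : Fin n, c (Sum.inl k) = c (Sum.inr k) ∧
            Quotient.mk'' (Sum.inl k) = q) then F else d) :=
      Finset.prod_le_prod' (fun q _ => AllowD_card_le hgF c q)
    have hI : ∏ q : Quotient (stdOf (LIl n ++ LCl c)), (AllowI h c q).card
        ≤ ∏ q : Quotient (stdOf (LIl n ++ LCl c)),
          (if (∃ k : Fin n, c (Sum.inr k) = c (Sum.inl (k+1)) ∧
            Quotient.mk'' (Sum.inr k) = q) then F else d) :=
      Finset.prod_le_prod' (fun q _ => AllowI_card_le hhF c q)
    rw [Finset.prod_ite (fun _ => F) (fun _ => d), Finset.prod_const, Finset.prod_const] at hD hI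
    set aD := (Finset.univ.filter (fun q : Quotient (stdOf (LDl n ++ LCl c)) =>
      ∃ k : Fin n, c (Sum.inl k) = c (Sum.inr k) ∧ Quotient.mk'' (Sum.inl k) = q)).card with haD
    set bD := (Finset.univ.filter (fun q : Quotient (stdOf (LDl n ++ LCl c)) =>
      ¬ ∃ k : Fin n, c (Sum.inl k) = c (Sum.inr k) ∧ Quotient.mk'' (Sum.inl k) = q)).card with hbD
    set aI := (Finset.univ.filter (fun q : Quotient (stdOf (LIl n ++ LCl c)) =>
      ∃ k : Fin n, c (Sum.inr k) = c (Sum.inl (k+1)) ∧ Quotient.mk'' (Sum.inr k) = q)).card with haI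
    set bI := (Finset.univ.filter (fun q : Quotient (stdOf (LIl n ++ LCl c)) =>
      ¬ ∃ k : Fin n, c (Sum.inr k) = c (Sum.inl (k+1)) ∧ Quotient.mk'' (Sum.inr k) = q)).card with hbI
    have hDk : aD + bD = Fintype.card (Quotient (stdOf (LDl n ++ LCl c))) := by
      rw [haD, hbD, ← Finset.card_univ]
      exact Finset.card_filter_add_card_filter_not _
    have hIk : aI + bI = Fintype.card (Quotient (stdOf (LIl n ++ LCl c))) := by
      rw [haI, hbI, ← Finset.card_univ]
      exact Finset.card_filter_add_card_filter_not _
    have hG1 := G1 c hc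
    have hfix : Fintype.card (Quotient (stdOf (LDl n ++ LCl c)))
        + Fintype.card (Quotient (stdOf (LIl n ++ LCl c))) = A + 1 → 1 ≤ aD + aI := by
      intro hKA
      rcases G2 c hKA with ⟨k, hk⟩ | ⟨k, hk⟩
      · have : (Quotient.mk'' (Sum.inl k) : Quotient (stdOf (LDl n ++ LCl c)))
            ∈ Finset.univ.filter (fun q => ∃ k' : Fin n,
              c (Sum.inl k') = c (Sum.inr k') ∧ Quotient.mk'' (Sum.inl k') = q) :=
          Finset.mem_filter.mpr ⟨Finset.mem_univ _, ⟨k, hk, rfl⟩⟩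
        have := Finset.card_pos.mpr ⟨_, this⟩
        omega
      · have : (Quotient.mk'' (Sum.inr k) : Quotient (stdOf (LIl n ++ LCl c)))
            ∈ Finset.univ.filter (fun q => ∃ k' : Fin n,
              c (Sum.inr k') = c (Sum.inl (k'+1)) ∧ Quotient.mk'' (Sum.inr k') = q) :=
          Finset.mem_filter.mpr ⟨Finset.mem_univ _, ⟨k, hk, rfl⟩⟩
        have := Finset.card_pos.mpr ⟨_, this⟩
        omega
    calc (∏ q : Quotient (stdOf (LDl n ++ LCl c)), (AllowD g c q).card)
          * ∏ q : Quotient (stdOf (LIl n ++ LCl c)), (AllowI h c q).card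
        ≤ (F ^ aD * d ^ bD) * (F ^ aI * d ^ bI) := Nat.mul_le_mul hD hI
      _ ≤ (F + 1) * d ^ A := arith_final hd hFd hDk hIk hG1 hfix
  calc Sc.card ≤ TF.card * (d - A)! := step3
    _ ≤ ((F + 1) * d ^ A) * (d - A)! := Nat.mul_le_mul_right _ hTFcard
    _ = (F + 1) * d ^ A * (d - A)! := by ring

end Assembly

section Total

variable {n d F : ℕ} [NeZero n]
variable {g h : Fin n → Fin d → Option (Fin d)}

lemma desc_bound {d A nn : ℕ} (hA : A ≤ nn) (hd : 2 * nn ≤ d) :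
    d ^ A * (d - A)! ≤ 2 ^ nn * d ! := by
  have key : ∀ B, B ≤ nn → d ^ B ≤ 2 ^ B * d.descFactorial B := by
    intro B
    induction B with
    | zero => intro; simp
    | succ B ih =>
      intro hB
      have h1 : d ^ B ≤ 2 ^ B * d.descFactorial B := ih (by omega)
      calc d ^ (B + 1) = d ^ B * d := by rw [pow_succ]
        _ ≤ (2 ^ B * d.descFactorial B) * d := Nat.mul_le_mul_right _ h1
        _ = 2 ^ B * d * d.descFactorial B := by ring
        _ ≤ 2 ^ B * (2 * (d - B)) * d.descFactorial B := by
            apply Nat.mul_le_mul_right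
            apply Nat.mul_le_mul_left
            omega
        _ = 2 ^ (B + 1) * ((d - B) * d.descFactorial B) := by ring
        _ = 2 ^ (B + 1) * d.descFactorial (B + 1) := by rw [Nat.descFactorial_succ]
  have hAd : A ≤ d := by omega
  calc d ^ A * (d - A)! ≤ (2 ^ A * d.descFactorial A) * (d - A)! :=
        Nat.mul_le_mul_right _ (key A hA)
    _ = 2 ^ A * ((d - A)! * d.descFactorial A) := by ring
    _ = 2 ^ A * d ! := by rw [Nat.factorial_mul_descFactorial hAd]
    _ ≤ 2 ^ nn * d ! := Nat.mul_le_mul_right _ (Nat.pow_le_pow_right (by norm_num) hA)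

lemma S_determined {s s' : Equiv.Perm (Fin d) × (Fin n → Fin d) × (Fin n → Fin d)}
    (hs : Scond g h s) (hs' : Scond g h s') (h1 : s.1 = s'.1) (h0 : s.2.1 0 = s'.2.1 0) :
    s = s' := by
  have hstep : ∀ k : Fin n, s.2.1 k = s'.2.1 k →
      s.2.2 k = s'.2.2 k ∧ s.2.1 (k+1) = s'.2.1 (k+1) := by
    intro k hYk
    have e1 : g k (s.1⁻¹ (s.2.1 k)) = some (s.2.2 k) := (hs k).1
    have e1' : g k (s'.1⁻¹ (s'.2.1 k)) = some (s'.2.2 k) := (hs' k).1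
    rw [← h1, ← hYk] at e1'
    have hA : s.2.2 k = s'.2.2 k := Option.some_inj.mp (e1.symm.trans e1')
    have e2 : h k (s.1 (s.2.2 k)) = some (s.2.1 (k+1)) := (hs k).2
    have e2' : h k (s'.1 (s'.2.2 k)) = some (s'.2.1 (k+1)) := (hs' k).2
    rw [← h1, ← hA] at e2'
    exact ⟨hA, Option.some_inj.mp (e2.symm.trans e2')⟩
  have hY : ∀ m : ℕ, (hm : m < n) → s.2.1 ⟨m, hm⟩ = s'.2.1 ⟨m, hm⟩ := by
    intro m
    induction m with
    | zero => intro hm; exact h0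
    | succ m ih =>
      intro hm
      have hm' : m < n := by omega
      have := (hstep ⟨m, hm'⟩ (ih hm')).2
      have e1 : (⟨m, hm'⟩ : Fin n) + 1 = ⟨m+1, hm⟩ := by
        apply Fin.ext
        rw [fin_add_one_val']
        exact Nat.mod_eq_of_lt hm
      rwa [e1] at this
  have hYall : ∀ k : Fin n, s.2.1 k = s'.2.1 k := by
    intro k
    have := hY k.1 k.isLt
    rwa [Fin.eta] at this
  refine Prod.ext h1 (Prod.ext (funext hYall) (funext (fun k => (hstep k (hYall k)).1)))

lemma core_count
    (hginj : ∀ k a b x, g k a = some x → g k b = some x → a = b)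
    (hhinj : ∀ k a b x, h k a = some x → h k b = some x → a = b)
    (hgF : ∀ k, (Finset.univ.filter (fun x => g k x = some x)).card ≤ F)
    (hhF : ∀ k, (Finset.univ.filter (fun x => h k x = some x)).card ≤ F)
    (hd : 0 < d) (hFd : F ≤ d) :
    (Finset.univ.filter (fun s : Equiv.Perm (Fin d) × (Fin n → Fin d) × (Fin n → Fin d) =>
        Scond g h s)).card
      ≤ ((n+n)^(n+n) * 2^(n+n) + 4*n) * ((F+1) * d !) := by
  classical
  rcases le_or_gt (2*(n+n)) d with hbig | hsmall
  · -- large d : pattern decomposition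
    have hdec : (Finset.univ.filter (fun s : Equiv.Perm (Fin d) × (Fin n → Fin d) ×
        (Fin n → Fin d) => Scond g h s)).card
        = ∑ c : (Wt n → Wt n), ((Finset.univ.filter (fun s : Equiv.Perm (Fin d) ×
          (Fin n → Fin d) × (Fin n → Fin d) => Scond g h s)).filter
            (fun s => patOf s = c)).card :=
      Finset.card_eq_sum_card_fiberwise (fun s _ => Finset.mem_univ _)
    rw [hdec]
    have hterm : ∀ c : Wt n → Wt n, ((Finset.univ.filter
        (fun s : Equiv.Perm (Fin d) × (Fin n → Fin d) × (Fin n → Fin d) =>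
          Scond g h s)).filter (fun s => patOf s = c)).card
        ≤ (F+1) * (2^(n+n) * d !) := by
      intro c
      rw [Finset.filter_filter]
      have hbnd := card_pattern_le hginj hhinj hgF hhF hd hFd c
      have hAle : (Finset.univ.image c).card ≤ n + n := by
        calc (Finset.univ.image c).card ≤ (Finset.univ : Finset (Wt n)).card :=
              Finset.card_image_le
          _ = n + n := by rw [Finset.card_univ]; simp
      have hdb := desc_bound hAle hbig
      calc ((Finset.univ.filter (fun s => Scond g h s ∧ patOf s = c))).card
          ≤ (F + 1) * d ^ ((Finset.univ.image c).card)
            * (d - (Finset.univ.image c).card)! := hbnd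
        _ = (F + 1) * (d ^ ((Finset.univ.image c).card)
            * (d - (Finset.univ.image c).card)!) := by ring
        _ ≤ (F + 1) * (2^(n+n) * d !) := Nat.mul_le_mul_left _ hdb
    calc ∑ c : (Wt n → Wt n), ((Finset.univ.filter (fun s : Equiv.Perm (Fin d) ×
          (Fin n → Fin d) × (Fin n → Fin d) => Scond g h s)).filter
          (fun s => patOf s = c)).card
        ≤ ∑ _c : (Wt n → Wt n), (F+1) * (2^(n+n) * d !) :=
          Finset.sum_le_sum (fun c _ => hterm c)
      _ = Fintype.card (Wt n → Wt n) * ((F+1) * (2^(n+n) * d !)) := by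
          rw [Finset.sum_const, Finset.card_univ, smul_eq_mul]
      _ = (n+n)^(n+n) * ((F+1) * (2^(n+n) * d !)) := by
          rw [Fintype.card_fun]
          congr 1
          · simp
      _ = ((n+n)^(n+n) * 2^(n+n)) * ((F+1) * d !) := by ring
      _ ≤ ((n+n)^(n+n) * 2^(n+n) + 4*n) * ((F+1) * d !) := by
          apply Nat.mul_le_mul_right
          omega
  · -- small d : trivial bound
    have hinj : (Finset.univ.filter (fun s : Equiv.Perm (Fin d) × (Fin n → Fin d) ×
        (Fin n → Fin d) => Scond g h s)).card
        ≤ Fintype.card (Fin d × Equiv.Perm (Fin d)) := by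
      rw [← Finset.card_univ]
      apply Finset.card_le_card_of_injOn (fun s => (s.2.1 0, s.1))
        (fun _ _ => Finset.mem_univ _)
      intro s hsm s' hsm' he
      simp only [Finset.coe_filter, Set.mem_setOf_eq] at hsm hsm'
      exact S_determined hsm.2 hsm'.2 (congrArg Prod.snd he) (congrArg Prod.fst he)
    have hcard : Fintype.card (Fin d × Equiv.Perm (Fin d)) = d * d ! := by
      rw [Fintype.card_prod, Fintype.card_fin, Fintype.card_perm, Fintype.card_fin]
    calc (Finset.univ.filter (fun s : Equiv.Perm (Fin d) × (Fin n → Fin d) ×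
          (Fin n → Fin d) => Scond g h s)).card
        ≤ d * d ! := by rw [← hcard]; exact hinj
      _ ≤ (4*n) * ((F+1) * d !) := by
          have : d ≤ 4 * n := by omega
          calc d * d ! ≤ (4*n) * d ! := Nat.mul_le_mul_right _ this
            _ ≤ (4*n) * ((F+1) * d !) := by
                apply Nat.mul_le_mul_left
                have : 1 ≤ F + 1 := by omega
                calc d ! = 1 * d ! := by ring
                  _ ≤ (F+1) * d ! := Nat.mul_le_mul_right _ this
      _ ≤ ((n+n)^(n+n) * 2^(n+n) + 4*n) * ((F+1) * d !) := by
          apply Nat.mul_le_mul_right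
          omega

end Total



set_option maxHeartbeats 3000000 in
/-- For every `n ≥ 1` there are constants `C_n, D_n > 0` such that for all `d ≥ 1` and all
`d × d` matrices `B₁, …, B_{2n}` with entries in `{0, 1}` having at most one nonzero entry in
each row and each column, the expectation over a uniformly random `d × d` permutation matrix
`U` of `tr_d (B₁ (U B₂ U*) ⋯ B_{2n-1} (U B_{2n} U*))` is at most `C_n f(d) + D_n / d`, where
`f(d) = max_{1 ≤ j ≤ 2n} tr_d (B_j)`. -/
theorem moment_bound (n : ℕ) (hn : 0 < n) :
    ∃ C D : ℝ, 0 < C ∧ 0 < D ∧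
      ∀ d : ℕ, 0 < d → ∀ B : Fin (2 * n) → Matrix (Fin d) (Fin d) ℝ,
        (∀ j k l, B j k l = 0 ∨ B j k l = 1) →
        (∀ j k l l', B j k l ≠ 0 → B j k l' ≠ 0 → l = l') →
        (∀ j k k' l, B j k l ≠ 0 → B j k' l ≠ 0 → k = k') →
        (∑ σ : Equiv.Perm (Fin d), Matrix.trace (momentProd B (permMat σ)) / d) /
            (Nat.factorial d) ≤
          C * (Finset.univ.sup'
                (Finset.univ_nonempty_iff.mpr ⟨⟨0, by omega⟩⟩)
                (fun j : Fin (2 * n) => Matrix.trace (B j) / d)) +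
            D / d := by
  classical
  haveI : NeZero n := ⟨hn.ne'⟩
  set Kn : ℕ := (n+n)^(n+n) * 2^(n+n) + 4*n with hKn
  have hKnpos : 0 < Kn := by positivity
  refine ⟨(Kn : ℝ), (Kn : ℝ), by exact_mod_cast hKnpos, by exact_mod_cast hKnpos, ?_⟩
  intro d hd B h01 hrow hcol
  set p : Fin (2*n) → Fin d → Option (Fin d) := fun j => pmapOf (B j) with hp
  have hB : ∀ j, B j = matOf (p j) := fun j => (matOf_pmapOf (B j) (h01 j) (hcol j)).symm
  have hpinj : ∀ j a b x, p j a = some x → p j b = some x → a = b :=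
    fun j => pmapOf_inj (B j) (hrow j)
  set Fx : Fin (2*n) → ℕ :=
    fun j => (Finset.univ.filter (fun l => p j l = some l)).card with hFx
  set F : ℕ := Finset.univ.sup Fx with hF
  have hFd : F ≤ d := by
    apply Finset.sup_le
    intro j _
    calc Fx j ≤ (Finset.univ : Finset (Fin d)).card := Finset.card_filter_le _ _
      _ = d := by rw [Finset.card_univ, Fintype.card_fin]
  set gw : Fin n → Fin d → Option (Fin d) :=
    fun k => p ⟨2*(n-1-k.1)+1, by have := k.isLt; omega⟩ with hgw
  set hw : Fin n → Fin d → Option (Fin d) :=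
    fun k => p ⟨2*(n-1-k.1), by have := k.isLt; omega⟩ with hhw
  have hginj : ∀ k a b x, gw k a = some x → gw k b = some x → a = b := fun k => hpinj _
  have hhinj : ∀ k a b x, hw k a = some x → hw k b = some x → a = b := fun k => hpinj _
  have hgF : ∀ k, (Finset.univ.filter (fun x => gw k x = some x)).card ≤ F :=
    fun k => Finset.le_sup (f := Fx) (Finset.mem_univ _)
  have hhF : ∀ k, (Finset.univ.filter (fun x => hw k x = some x)).card ≤ F :=
    fun k => Finset.le_sup (f := Fx) (Finset.mem_univ _)
  set NFix : Equiv.Perm (Fin d) → ℕ :=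
    fun σ => (Finset.univ.filter (fun i => chainOf (blkOf p σ) i = some i)).card with hNFix
  have htr : ∀ σ : Equiv.Perm (Fin d),
      Matrix.trace (momentProd B (permMat σ)) = (NFix σ : ℝ) := by
    intro σ
    rw [momentProd_eq_matOf B p hB σ, trace_matOf]
  set SIG : Finset ((_ : Equiv.Perm (Fin d)) × Fin d) :=
    Finset.univ.sigma (fun σ => Finset.univ.filter
      (fun i => chainOf (blkOf p σ) i = some i)) with hSIG
  have hsigcard : SIG.card = ∑ σ : Equiv.Perm (Fin d), NFix σ := Finset.card_sigma _ _
  have hkey : SIG.card ≤ (Finset.univ.filter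
      (fun s : Equiv.Perm (Fin d) × (Fin n → Fin d) × (Fin n → Fin d) =>
        Scond gw hw s)).card := by
    apply Finset.card_le_card_of_injOn
      (fun si => if hc : chainOf (blkOf p si.1) si.2 = some si.2 then
        (si.1, (exists_SData p si.1 si.2 hc).choose,
          (exists_SData p si.1 si.2 hc).choose_spec.choose)
        else (si.1, fun _ => si.2, fun _ => si.2))
    · intro si hsi
      have hc : chainOf (blkOf p si.1) si.2 = some si.2 :=
        (Finset.mem_filter.mp (Finset.mem_sigma.mp hsi).2).2
      rw [Finset.mem_coe]; beta_reduce; rw [dif_pos hc]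
      refine Finset.mem_filter.mpr ⟨Finset.mem_univ _, ?_⟩
      intro k
      exact ((exists_SData p si.1 si.2 hc).choose_spec.choose_spec.2 k)
    · intro si hsi si' hsi' he
      have hsi2 := Finset.mem_coe.mp hsi
      have hsi2' := Finset.mem_coe.mp hsi'
      have hc : chainOf (blkOf p si.1) si.2 = some si.2 :=
        (Finset.mem_filter.mp (Finset.mem_sigma.mp hsi2).2).2
      have hc' : chainOf (blkOf p si'.1) si'.2 = some si'.2 :=
        (Finset.mem_filter.mp (Finset.mem_sigma.mp hsi2').2).2
      simp only [dif_pos hc, dif_pos hc'] at he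
      have h1 : si.1 = si'.1 := congrArg Prod.fst he
      have hY : (exists_SData p si.1 si.2 hc).choose
          = (exists_SData p si'.1 si'.2 hc').choose :=
        congrArg (fun z => z.2.1) he
      have h2 : si.2 = si'.2 := by
        rw [← (exists_SData p si.1 si.2 hc).choose_spec.choose_spec.1,
          ← (exists_SData p si'.1 si'.2 hc').choose_spec.choose_spec.1, hY]
      exact Sigma.ext h1 (by rw [h2])
  have hcore := core_count (g := gw) (h := hw) hginj hhinj hgF hhF hd hFd
  have hNtot : ∑ σ : Equiv.Perm (Fin d), NFix σ ≤ Kn * ((F+1) * d !) := by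
    rw [← hsigcard]
    exact le_trans hkey hcore
  have hdR : (0:ℝ) < d := by exact_mod_cast hd
  have hfacR : (0:ℝ) < (d ! : ℝ) := by exact_mod_cast Nat.factorial_pos d
  have hLHS : (∑ σ : Equiv.Perm (Fin d), Matrix.trace (momentProd B (permMat σ)) / d) /
      (Nat.factorial d) = ((∑ σ : Equiv.Perm (Fin d), NFix σ : ℕ) : ℝ) / (d * d !) := by
    rw [← Finset.sum_div]
    have : (∑ σ : Equiv.Perm (Fin d), Matrix.trace (momentProd B (permMat σ)))
        = ((∑ σ : Equiv.Perm (Fin d), NFix σ : ℕ) : ℝ) := by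
      push_cast
      exact Finset.sum_congr rfl (fun σ _ => htr σ)
    rw [this, div_div]
  rw [hLHS]
  have hstep : ((∑ σ : Equiv.Perm (Fin d), NFix σ : ℕ) : ℝ) / (d * d !)
      ≤ (Kn : ℝ) * (((F:ℕ):ℝ)+1) / d := by
    have hnum : ((∑ σ : Equiv.Perm (Fin d), NFix σ : ℕ) : ℝ)
        ≤ (Kn : ℝ) * ((((F:ℕ):ℝ)+1) * (d ! : ℝ)) := by
      exact_mod_cast hNtot
    have hden : (0:ℝ) < (d : ℝ) * (d ! : ℝ) := by positivity
    calc ((∑ σ : Equiv.Perm (Fin d), NFix σ : ℕ) : ℝ) / (d * d !)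
        ≤ ((Kn : ℝ) * ((((F:ℕ):ℝ)+1) * (d ! : ℝ))) / (d * d !) := by
          gcongr
      _ = (Kn : ℝ) * (((F:ℕ):ℝ)+1) / d := by
          field_simp
  have hne2n : Nonempty (Fin (2*n)) := ⟨⟨0, by omega⟩⟩
  obtain ⟨jst, -, hjst⟩ := Finset.exists_mem_eq_sup Finset.univ
    (Finset.univ_nonempty_iff.mpr hne2n) Fx
  have htrB : Matrix.trace (B jst) = ((Fx jst : ℕ) : ℝ) := by
    rw [hB jst, trace_matOf]
  have hFsup : ((F : ℕ) : ℝ) / d ≤ Finset.univ.sup'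
      (Finset.univ_nonempty_iff.mpr ⟨⟨0, by omega⟩⟩)
      (fun j : Fin (2 * n) => Matrix.trace (B j) / d) := by
    have hle := Finset.le_sup' (f := fun j : Fin (2*n) => Matrix.trace (B j) / d)
      (Finset.mem_univ jst)
    calc ((F : ℕ) : ℝ) / d = Matrix.trace (B jst) / d := by rw [htrB, hF, hjst]
      _ ≤ _ := hle
  have hsplit : (Kn : ℝ) * (((F:ℕ):ℝ)+1) / d = (Kn:ℝ) * (((F:ℕ):ℝ)/d) + (Kn:ℝ)/d := by
    field_simp
  calc ((∑ σ : Equiv.Perm (Fin d), NFix σ : ℕ) : ℝ) / (d * d !)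
      ≤ (Kn : ℝ) * (((F:ℕ):ℝ)+1) / d := hstep
    _ = (Kn:ℝ) * (((F:ℕ):ℝ)/d) + (Kn:ℝ)/d := hsplit
    _ ≤ (Kn:ℝ) * (Finset.univ.sup' (Finset.univ_nonempty_iff.mpr ⟨⟨0, by omega⟩⟩)
          (fun j : Fin (2 * n) => Matrix.trace (B j) / d)) + (Kn:ℝ)/d := by
        refine add_le_add ?_ le_rfl
        exact mul_le_mul_of_nonneg_left hFsup (by positivity)
end

section
/- Let U = (u_{i,j}) be a uniformly distributed random d×d permutation matrix and let m ∈ ℕ and k₁, …, k_m, ℓ₁, …, ℓ_m ∈ {1, …, d}. Let r be the partition of {1, …, m} defined by i ∼_r j if and only if k_i = k_j, and let s be the partition of {1, …, m} defined by i ∼_s j if and only if ℓ_i = ℓ_j. Then ∫ u_{k₁,ℓ₁} u_{k₂,ℓ₂} ⋯ u_{k_m,ℓ_m} dU equals (d − |r|)!/d! if r = s, and equals 0 if r ≠ s. -/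
open scoped Classical

lemma card_perm_aux (d m : ℕ) (k l : Fin m → Fin d)
    (hker : Setoid.ker k = Setoid.ker l) :
    Nat.card {σ : Equiv.Perm (Fin d) // ∀ i, σ (l i) = k i} =
      (d - Nat.card (Quotient (Setoid.ker k))).factorial := by
  classical
  have hiff : ∀ i j, k i = k j ↔ l i = l j := by
    intro i j
    have := Setoid.ext_iff.mp hker i j
    simpa [Setoid.ker_def] using this
  -- the bijection between the ranges
  set S : Set (Fin d) := Set.range l with hS
  set K : Set (Fin d) := Set.range k with hK
  let g : {x : Fin d // x ∈ S} → {x : Fin d // x ∈ K} := fun x =>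
    ⟨k (Classical.choose x.2), Set.mem_range_self _⟩
  have gkey : ∀ (i : Fin m) (h : l i ∈ S), (g ⟨l i, h⟩ : Fin d) = k i := by
    intro i h
    have hspec : l (Classical.choose (⟨l i, h⟩ : {x : Fin d // x ∈ S}).2) = l i :=
      Classical.choose_spec (⟨l i, h⟩ : {x : Fin d // x ∈ S}).2
    exact (hiff _ _).mpr hspec
  have hgbij : Function.Bijective g := by
    constructor
    · rintro ⟨x, hx⟩ ⟨y, hy⟩ hxy
      obtain ⟨i, rfl⟩ := hx
      obtain ⟨j, rfl⟩ := hy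
      have h1 : (g ⟨l i, Set.mem_range_self i⟩ : Fin d) = k i := gkey i _
      have h2 : (g ⟨l j, Set.mem_range_self j⟩ : Fin d) = k j := gkey j _
      have : k i = k j := by
        rw [← h1, ← h2]; exact congrArg _ hxy
      exact Subtype.ext ((hiff i j).mp this)
    · rintro ⟨y, hy⟩
      obtain ⟨i, rfl⟩ := hy
      exact ⟨⟨l i, Set.mem_range_self i⟩, Subtype.ext (gkey i _)⟩
  let e : {x : Fin d // x ∈ S} ≃ {x : Fin d // x ∈ K} := Equiv.ofBijective g hgbij
  let σ₀ : Equiv.Perm (Fin d) := e.extendSubtype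
  have hσ₀ : ∀ i, σ₀ (l i) = k i := by
    intro i
    have := e.extendSubtype_apply_of_mem (l i) (Set.mem_range_self i)
    rw [this]
    exact gkey i _
  -- move to the stabilizer-type set
  have E1 : {σ : Equiv.Perm (Fin d) // ∀ i, σ (l i) = k i} ≃
      {τ : Equiv.Perm (Fin d) // ∀ a, ¬ a ∉ S → τ a = a} :=
  { toFun := fun σ => ⟨σ₀⁻¹ * σ.1, by
      intro a ha
      rw [not_not] at ha
      obtain ⟨i, rfl⟩ := ha
      simp [σ.2 i, ← hσ₀ i]⟩
    invFun := fun τ => ⟨σ₀ * τ.1, by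
      intro i
      have := τ.2 (l i) (by simp [hS, Set.mem_range_self i])
      simp [this, hσ₀ i]⟩
    left_inv := fun σ => Subtype.ext (mul_inv_cancel_left _ _)
    right_inv := fun τ => Subtype.ext (inv_mul_cancel_left _ _) }
  have E2 : {τ : Equiv.Perm (Fin d) // ∀ a, ¬ a ∉ S → τ a = a} ≃
      Equiv.Perm {a : Fin d // a ∉ S} :=
    (Equiv.Perm.subtypeEquivSubtypePerm (fun a => a ∉ S)).symm
  rw [Nat.card_congr (E1.trans E2)]
  have hcardS : Fintype.card {a : Fin d // a ∈ S} = Nat.card (Quotient (Setoid.ker k)) := by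
    rw [hker]
    rw [← Nat.card_eq_fintype_card, Nat.card_congr (Setoid.quotientKerEquivRange l).symm]
  rw [Nat.card_eq_fintype_card, Fintype.card_perm, Fintype.card_subtype_compl, hcardS,
    Fintype.card_fin]

/-- For a uniformly distributed random `d × d` permutation matrix `U = (u_{i,j})` and indices
`k₁, …, k_m, ℓ₁, …, ℓ_m ∈ {1, …, d}`, the expectation `∫ u_{k₁,ℓ₁} ⋯ u_{k_m,ℓ_m} dU` equals
`(d - |r|)! / d!` if `r = s` and `0` otherwise, where `r` (resp. `s`) is the partition of
`{1, …, m}` given by `i ∼ j ↔ k_i = k_j` (resp. `i ∼ j ↔ ℓ_i = ℓ_j`). -/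
theorem expectation_entries_perm (d m : ℕ) (k l : Fin m → Fin d) :
    (∑ σ : Equiv.Perm (Fin d), ∏ i : Fin m, permMat σ (k i) (l i)) /
        (Nat.factorial d : ℝ) =
      if Setoid.ker k = Setoid.ker l then
        ((d - Nat.card (Quotient (Setoid.ker k))).factorial : ℝ) / (Nat.factorial d : ℝ)
      else 0 := by
  classical
  have hprod : ∀ σ : Equiv.Perm (Fin d),
      (∏ i : Fin m, permMat σ (k i) (l i)) =
        if ∀ i : Fin m, σ (l i) = k i then (1 : ℝ) else 0 := by
    intro σ
    simp only [permMat, Matrix.of_apply]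
    rw [Fintype.prod_boole]
    simp
  rw [Finset.sum_congr rfl (fun σ _ => hprod σ), Finset.sum_boole]
  by_cases hker : Setoid.ker k = Setoid.ker l
  · rw [if_pos hker]
    congr 1
    rw [← card_perm_aux d m k l hker, Nat.card_eq_fintype_card, Fintype.card_subtype]
  · rw [if_neg hker]
    have : (Finset.univ.filter fun σ : Equiv.Perm (Fin d) => ∀ i, σ (l i) = k i) = ∅ := by
      rw [Finset.filter_eq_empty_iff]
      intro σ _ hσ
      apply hker
      ext i j
      constructor
      · intro h
        have : σ (l i) = σ (l j) := by rw [hσ i, hσ j]; exact h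
        exact σ.injective this
      · intro h
        rw [Setoid.ker_def]
        rw [← hσ i, ← hσ j, h]
    rw [this]
    simp
end

section
/- Let n ≥ 1, let r be any partition of {1, …, 2n}, let η = {{1,2}, {3,4}, …, {2n−1,2n}} and let η' = {{2n,1}, {2,3}, {4,5}, …, {2n−2, 2n−1}} be the two partitions of {1, …, 2n} into pairs of cyclically adjacent elements. Then |r ∨ η| + |r ∨ η'| ≤ |r| + 1. -/
/-- The partition `η = {{1,2}, {3,4}, …, {2n-1,2n}}` of `{1, …, 2n}` into consecutive pairs
(here `{0,1}, {2,3}, …` on `Fin (2 * n)`), as a setoid. -/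
def pairPartition (n : ℕ) : Setoid (Fin (2 * n)) :=
  Setoid.ker fun i => (i : ℕ) / 2

/-- The partition `η' = {{2n,1}, {2,3}, {4,5}, …, {2n-2,2n-1}}` of `{1, …, 2n}` into the other
pairs of cyclically adjacent elements (here `{2n-1,0}, {1,2}, {3,4}, …` on `Fin (2 * n)`),
as a setoid. -/
def pairPartition' (n : ℕ) : Setoid (Fin (2 * n)) :=
  Setoid.ker fun i => (((i : ℕ) + 1) % (2 * n)) / 2

section Aux

variable {α : Type*}

/-- The setoid obtained from `u` by merging the classes of `x` and `y`. -/
def addPair (u : Setoid α) (x y : α) : Setoid α where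
  r z w := u z w ∨ (u z x ∧ u y w) ∨ (u z y ∧ u x w)
  iseqv := by
    refine ⟨fun z => Or.inl (u.refl z), ?_, ?_⟩
    · rintro z w (h | ⟨h1, h2⟩ | ⟨h1, h2⟩)
      · exact Or.inl (u.symm' h)
      · exact Or.inr (Or.inr ⟨u.symm' h2, u.symm' h1⟩)
      · exact Or.inr (Or.inl ⟨u.symm' h2, u.symm' h1⟩)
    · rintro z w v (h | ⟨h1, h2⟩ | ⟨h1, h2⟩) (h' | ⟨h1', h2'⟩ | ⟨h1', h2'⟩)
      · exact Or.inl (u.trans' h h')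
      · exact Or.inr (Or.inl ⟨u.trans' h h1', h2'⟩)
      · exact Or.inr (Or.inr ⟨u.trans' h h1', h2'⟩)
      · exact Or.inr (Or.inl ⟨h1, u.trans' h2 h'⟩)
      · exact Or.inl (u.trans' (u.trans' h1 (u.symm' (u.trans' h2 h1'))) h2')
      · exact Or.inl (u.trans' h1 h2')
      · exact Or.inr (Or.inr ⟨h1, u.trans' h2 h'⟩)
      · exact Or.inl (u.trans' h1 h2')
      · exact Or.inl (u.trans' (u.trans' h1 (u.symm' (u.trans' h2 h1'))) h2')

theorem le_addPair (u : Setoid α) (x y : α) : u ≤ addPair u x y :=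
  Setoid.le_def.mpr fun h => Or.inl h

theorem addPair_rel_pair (u : Setoid α) (x y : α) : addPair u x y x y :=
  Or.inr (Or.inl ⟨u.refl x, u.refl y⟩)

theorem addPair_eq_of_rel {u : Setoid α} {x y : α} (h : u x y) : addPair u x y = u := by
  ext z w
  constructor
  · rintro (h' | ⟨h1, h2⟩ | ⟨h1, h2⟩)
    · exact h'
    · exact u.trans' (u.trans' h1 h) h2
    · exact u.trans' (u.trans' h1 (u.symm' h)) h2
  · exact fun h' => Or.inl h'

theorem sup_addPair (u t : Setoid α) (x y : α) :
    addPair u x y ⊔ t = addPair (u ⊔ t) x y := by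
  have hu : u ≤ u ⊔ t := le_sup_left
  have ht : t ≤ u ⊔ t := le_sup_right
  apply le_antisymm
  · refine sup_le ?_ (le_trans ht (le_addPair _ _ _))
    refine Setoid.le_def.mpr ?_
    rintro z w (h | ⟨h1, h2⟩ | ⟨h1, h2⟩)
    · exact Or.inl (Setoid.le_def.mp hu h)
    · exact Or.inr (Or.inl ⟨Setoid.le_def.mp hu h1, Setoid.le_def.mp hu h2⟩)
    · exact Or.inr (Or.inr ⟨Setoid.le_def.mp hu h1, Setoid.le_def.mp hu h2⟩)
  · set V := addPair u x y ⊔ t with hV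
    have hUV : u ⊔ t ≤ V := sup_le (le_trans (le_addPair u x y) le_sup_left) le_sup_right
    have hxyV : V x y := Setoid.le_def.mp (le_sup_left : addPair u x y ≤ V) (addPair_rel_pair u x y)
    refine Setoid.le_def.mpr ?_
    rintro z w (h | ⟨h1, h2⟩ | ⟨h1, h2⟩)
    · exact Setoid.le_def.mp hUV h
    · exact V.trans' (V.trans' (Setoid.le_def.mp hUV h1) hxyV) (Setoid.le_def.mp hUV h2)
    · exact V.trans' (V.trans' (Setoid.le_def.mp hUV h1) (V.symm' hxyV)) (Setoid.le_def.mp hUV h2)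

theorem card_quotient_bot [Finite α] : Nat.card (Quotient (⊥ : Setoid α)) = Nat.card α := by
  refine (Nat.card_eq_of_bijective (Quotient.mk _)
    ⟨fun a b h => ?_, fun q => Quotient.exists_rep q⟩).symm
  exact Quotient.exact h

theorem setoid_eq_bot {s : Setoid α} (h : ∀ x y : α, s x y → x = y) : s = ⊥ := by
  refine le_antisymm ?_ bot_le
  refine Setoid.le_def.mpr ?_
  intro x y hxy
  exact h x y hxy ▸ (⊥ : Setoid α).refl x

/-- Split `y` off from its class: an `s'` with `s = addPair s' x y` and `¬ s' x y`. -/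
theorem exists_addPair {s : Setoid α} {x y : α} (hxy : s x y) (hne : x ≠ y) :
    ∃ s' : Setoid α, ¬ s' x y ∧ s = addPair s' x y := by
  refine ⟨⟨fun z w => s z w ∧ (z = y ↔ w = y),
      ⟨fun z => ⟨s.refl z, Iff.rfl⟩,
       fun ⟨h1, h2⟩ => ⟨s.symm' h1, h2.symm⟩,
       fun ⟨h1, h2⟩ ⟨h1', h2'⟩ => ⟨s.trans' h1 h1', h2.trans h2'⟩⟩⟩,
    fun ⟨_, h2⟩ => hne (h2.mpr rfl), ?_⟩
  ext z w
  constructor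
  · intro hzw
    by_cases hzy : z = y <;> by_cases hwy : w = y
    · exact Or.inl ⟨hzw, by simp [hzy, hwy]⟩
    · refine Or.inr (Or.inr ⟨⟨?_, by simp [hzy]⟩, ?_, by simp [hne, hwy]⟩)
      · rw [hzy]
      · rw [hzy] at hzw; exact s.trans' hxy hzw
    · refine Or.inr (Or.inl ⟨⟨?_, by simp [hne, hzy]⟩, ?_, by simp [hwy]⟩)
      · rw [hwy] at hzw; exact s.trans' hzw (s.symm' hxy)
      · rw [hwy]
    · exact Or.inl ⟨hzw, by simp [hzy, hwy]⟩
  · rintro (⟨h1, _⟩ | ⟨⟨h1, _⟩, ⟨h2, _⟩⟩ | ⟨⟨h1, _⟩, ⟨h2, _⟩⟩)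
    · exact h1
    · exact s.trans' (s.trans' h1 hxy) h2
    · exact s.trans' (s.trans' h1 (s.symm' hxy)) h2

theorem card_quotient_addPair [Finite α] (u : Setoid α) {x y : α} (h : ¬ u x y) :
    Nat.card (Quotient (addPair u x y)) + 1 = Nat.card (Quotient u) := by
  classical
  set v := addPair u x y with hv
  have hle : u ≤ v := le_addPair u x y
  let f : Quotient u → Quotient v := Quotient.map' id (fun a b hab => Setoid.le_def.mp hle hab)
  have hf : ∀ z : α, f (Quotient.mk u z) = Quotient.mk v z := fun z => rfl
  have hbij : Function.Bijective (fun c : {c : Quotient u // c ≠ Quotient.mk u y} => f c.1) := by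
    constructor
    · rintro ⟨c, hc⟩ ⟨c', hc'⟩ hcc
      induction c using Quotient.inductionOn with | h z =>
      induction c' using Quotient.inductionOn with | h w =>
      simp only [hf] at hcc
      have hzw : v z w := Quotient.exact hcc
      rcases hzw with h' | ⟨h1, h2⟩ | ⟨h1, h2⟩
      · exact Subtype.ext (Quotient.sound h')
      · exact absurd (Quotient.sound (u.symm' h2) : Quotient.mk u w = Quotient.mk u y) hc'
      · exact absurd (Quotient.sound h1 : Quotient.mk u z = Quotient.mk u y) hc
    · intro d
      induction d using Quotient.inductionOn with | h z =>
      by_cases hz : u z y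
      · refine ⟨⟨Quotient.mk u x, fun hc => h (Quotient.exact hc)⟩, ?_⟩
        simp only [hf]
        exact Quotient.sound (Or.inr (Or.inl ⟨u.refl x, u.symm' hz⟩))
      · exact ⟨⟨Quotient.mk u z, fun hc => hz (Quotient.exact hc)⟩, rfl⟩
  have h1 : Nat.card {c : Quotient u // c ≠ Quotient.mk u y} = Nat.card (Quotient v) :=
    Nat.card_eq_of_bijective _ hbij
  have h2 : Nat.card (Quotient u) = Nat.card {c : Quotient u // c ≠ Quotient.mk u y} + 1 := by
    have := Nat.card_congr (Equiv.optionSubtypeNe (Quotient.mk u y)).symm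
    rw [this, Finite.card_option]
  omega

theorem card_quotient_le_card_quotient_addPair [Finite α] (u : Setoid α) (x y : α) :
    Nat.card (Quotient u) ≤ Nat.card (Quotient (addPair u x y)) + 1 := by
  by_cases h : u x y
  · rw [addPair_eq_of_rel h]; exact Nat.le_succ _
  · exact (card_quotient_addPair u h).ge

/-- Key counting lemma: `|Q s| + |Q t| ≤ |α| + |Q (s ⊔ t)|`. -/
theorem key [Finite α] (k : ℕ) (s t : Setoid α) (hk : Nat.card α ≤ Nat.card (Quotient s) + k) :
    Nat.card (Quotient s) + Nat.card (Quotient t) ≤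
      Nat.card α + Nat.card (Quotient (s ⊔ t)) := by
  induction k generalizing s t with
  | zero =>
    have hbot : s = ⊥ := by
      refine setoid_eq_bot fun x y hxy => ?_
      by_contra hne
      obtain ⟨s', hns', heq⟩ := exists_addPair hxy hne
      have hcard : Nat.card (Quotient s) + 1 = Nat.card (Quotient s') := by
        rw [heq]; exact card_quotient_addPair s' hns'
      have hle' : Nat.card (Quotient s') ≤ Nat.card α :=
        Nat.card_le_card_of_surjective (Quotient.mk s') (Quotient.exists_rep)
      omega
    subst hbot
    rw [bot_sup_eq, card_quotient_bot]
  | succ k ih =>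
    by_cases hbot : ∀ x y : α, s x y → x = y
    · rw [setoid_eq_bot hbot, bot_sup_eq, card_quotient_bot]
    · push_neg at hbot
      obtain ⟨x, y, hxy, hne⟩ := hbot
      obtain ⟨s', hns', heq⟩ := exists_addPair hxy hne
      have hcard : Nat.card (Quotient s) + 1 = Nat.card (Quotient s') := by
        rw [heq]; exact card_quotient_addPair s' hns'
      have hIH := ih s' t (by omega)
      have hsup : s ⊔ t = addPair (s' ⊔ t) x y := by
        rw [heq, sup_addPair]
      have hA' : Nat.card (Quotient (s' ⊔ t)) ≤ Nat.card (Quotient (s ⊔ t)) + 1 := by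
        rw [hsup]
        exact card_quotient_le_card_quotient_addPair (s' ⊔ t) x y
      omega

/-- Main abstract lemma. -/
theorem main_abstract [Finite α] [Nonempty α] (r a b : Setoid α) (hab : a ⊔ b = ⊤) :
    Nat.card (Quotient (r ⊔ a)) + Nat.card (Quotient (r ⊔ b)) ≤
      Nat.card (Quotient r) + 1 := by
  classical
  let f : Quotient r → Quotient (r ⊔ a) :=
    Quotient.map' id (fun c d h => Setoid.le_def.mp (le_sup_left : r ≤ r ⊔ a) h)
  let g : Quotient r → Quotient (r ⊔ b) :=
    Quotient.map' id (fun c d h => Setoid.le_def.mp (le_sup_left : r ≤ r ⊔ b) h)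
  have hfs : Function.Surjective f := by
    intro d
    induction d using Quotient.inductionOn with | h z =>
    exact ⟨Quotient.mk r z, rfl⟩
  have hgs : Function.Surjective g := by
    intro d
    induction d using Quotient.inductionOn with | h z =>
    exact ⟨Quotient.mk r z, rfl⟩
  let s : Setoid (Quotient r) := Setoid.ker f
  let t : Setoid (Quotient r) := Setoid.ker g
  have e1 : Nat.card (Quotient s) = Nat.card (Quotient (r ⊔ a)) :=
    Nat.card_congr (Setoid.quotientKerEquivOfSurjective f hfs)
  have e2 : Nat.card (Quotient t) = Nat.card (Quotient (r ⊔ b)) :=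
    Nat.card_congr (Setoid.quotientKerEquivOfSurjective g hgs)
  have hrel : ∀ z w : α, Relation.EqvGen (fun u v => (r ⊔ a) u v ∨ (r ⊔ b) u v) z w →
      (s ⊔ t) (Quotient.mk r z) (Quotient.mk r w) := by
    intro z w h
    induction h with
    | rel u v h =>
      rcases h with h | h
      · refine Setoid.le_def.mp (le_sup_left : s ≤ s ⊔ t) ?_
        exact (Quotient.sound h : Quotient.mk (r ⊔ a) u = Quotient.mk (r ⊔ a) v)
      · refine Setoid.le_def.mp (le_sup_right : t ≤ s ⊔ t) ?_
        exact (Quotient.sound h : Quotient.mk (r ⊔ b) u = Quotient.mk (r ⊔ b) v)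
    | refl u => exact (s ⊔ t).refl _
    | symm u v _ ih => exact (s ⊔ t).symm' ih
    | trans u v w _ _ ih1 ih2 => exact (s ⊔ t).trans' ih1 ih2
  have hst : s ⊔ t = ⊤ := by
    rw [Setoid.eq_top_iff]
    intro c d
    induction c using Quotient.inductionOn with | h z =>
    induction d using Quotient.inductionOn with | h w =>
    refine hrel z w ?_
    have htop : ((r ⊔ a) ⊔ (r ⊔ b)) = (⊤ : Setoid α) := by
      refine le_antisymm le_top ?_
      rw [← hab]
      exact sup_le (le_trans le_sup_right le_sup_left) (le_trans le_sup_right le_sup_right)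
    have hzw : ((r ⊔ a) ⊔ (r ⊔ b)) z w := by rw [htop]; trivial
    rw [Setoid.sup_eq_eqvGen] at hzw
    exact hzw
  have htopcard : Nat.card (Quotient (⊤ : Setoid (Quotient r))) = 1 := by
    rw [Nat.card_eq_one_iff_unique]
    refine ⟨⟨fun c d => ?_⟩, ⟨Quotient.mk _ (Quotient.mk r (Classical.arbitrary α))⟩⟩
    induction c using Quotient.inductionOn with | h z =>
    induction d using Quotient.inductionOn with | h w =>
    exact Quotient.sound trivial
  have hkey := key (Nat.card (Quotient r)) s t (by omega)
  rw [hst, htopcard] at hkey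
  rw [← e1, ← e2]
  exact hkey

end Aux

theorem pairPartitions_sup_eq_top (n : ℕ) (hn : 1 ≤ n) :
    pairPartition n ⊔ pairPartition' n = ⊤ := by
  have h0 : 0 < 2 * n := by omega
  have chain : ∀ m (hm : m < 2 * n),
      (pairPartition n ⊔ pairPartition' n) ⟨m, hm⟩ ⟨0, h0⟩ := by
    intro m
    induction m with
    | zero => intro hm; exact (pairPartition n ⊔ pairPartition' n).refl _
    | succ m ih =>
      intro hm
      have hm' : m < 2 * n := by omega
      refine (pairPartition n ⊔ pairPartition' n).trans' ?_ (ih hm')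
      rcases Nat.even_or_odd m with he | ho
      · obtain ⟨j, hj⟩ := he
        refine Setoid.le_def.mp (le_sup_left : pairPartition n ≤ _) ?_
        show ((⟨m + 1, hm⟩ : Fin (2 * n)) : ℕ) / 2 = ((⟨m, hm'⟩ : Fin (2 * n)) : ℕ) / 2
        simp only [Fin.val_mk]
        omega
      · obtain ⟨j, hj⟩ := ho
        refine Setoid.le_def.mp (le_sup_right : pairPartition' n ≤ _) ?_
        show (((⟨m + 1, hm⟩ : Fin (2 * n)) : ℕ) + 1) % (2 * n) / 2
            = (((⟨m, hm'⟩ : Fin (2 * n)) : ℕ) + 1) % (2 * n) / 2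
        simp only [Fin.val_mk]
        have h1 : m + 2 < 2 * n := by omega
        have h2 : m + 1 < 2 * n := hm
        rw [Nat.mod_eq_of_lt h1, Nat.mod_eq_of_lt h2]
        omega
  rw [Setoid.eq_top_iff]
  intro i j
  have hi := chain i.val i.isLt
  have hj := chain j.val j.isLt
  simp only [Fin.eta] at hi hj
  exact (pairPartition n ⊔ pairPartition' n).trans' hi
    ((pairPartition n ⊔ pairPartition' n).symm' hj)

/-- For any partition `r` of `{1, …, 2n}`, with `η = {{1,2}, …, {2n-1,2n}}` and
`η' = {{2n,1}, {2,3}, …, {2n-2,2n-1}}`, we have `|r ∨ η| + |r ∨ η'| ≤ |r| + 1`. -/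
theorem blocks_join_pairs_le (n : ℕ) (hn : 1 ≤ n) (r : Setoid (Fin (2 * n))) :
    Nat.card (Quotient (r ⊔ pairPartition n)) + Nat.card (Quotient (r ⊔ pairPartition' n)) ≤
      Nat.card (Quotient r) + 1 := by
  have : Nonempty (Fin (2 * n)) := ⟨⟨0, by omega⟩⟩
  exact main_abstract r (pairPartition n) (pairPartition' n) (pairPartitions_sup_eq_top n hn)
end

section
/- Let n ≥ 1 and let r be a partition of {1, …, 2n} such that j and j+1 lie in different blocks of r for every j ∈ {1, …, 2n−1}, and 1 and 2n lie in different blocks of r. Let η = {{1,2}, {3,4}, …, {2n−1,2n}} and η' = {{2n,1}, {2,3}, {4,5}, …, {2n−2, 2n−1}}. Then |r ∨ η| + |r ∨ η'| ≤ |r|. -/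
/-- If every element has a `t`-partner in a different `s`-class (where `s ≤ t`), then every
`t`-class contains at least two `s`-classes, hence `2 * |Quotient t| ≤ |Quotient s|`. -/
lemma two_mul_card_quotient_le {α : Type*} [Finite α] {s t : Setoid α} (hst : s ≤ t)
    (h : ∀ x : α, ∃ y : α, ¬ s.r x y ∧ t.r x y) :
    2 * Nat.card (Quotient t) ≤ Nat.card (Quotient s) := by
  classical
  let φ : Quotient s → Quotient t :=
    Quotient.lift (fun x => Quotient.mk t x) (fun a b hab => Quotient.sound (hst hab))
  let f : Quotient t × Bool → Quotient s := fun p =>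
    cond p.2 (Quotient.mk s p.1.out) (Quotient.mk s (h p.1.out).choose)
  have hφf : ∀ p : Quotient t × Bool, φ (f p) = p.1 := by
    rintro ⟨c, b⟩
    cases b
    · show φ (Quotient.mk s (h c.out).choose) = c
      show Quotient.mk t (h c.out).choose = c
      have ht := (h c.out).choose_spec.2
      calc Quotient.mk t (h c.out).choose = Quotient.mk t c.out := Quotient.sound (t.symm ht)
        _ = c := c.out_eq
    · show φ (Quotient.mk s c.out) = c
      show Quotient.mk t c.out = c
      exact c.out_eq
  have hinj : Function.Injective f := by
    rintro ⟨c, b⟩ ⟨c', b'⟩ hfe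
    have hc : c = c' := by
      have := congrArg φ hfe
      rwa [hφf ⟨c, b⟩, hφf ⟨c', b'⟩] at this
    subst hc
    cases b <;> cases b'
    · rfl
    · exfalso
      have hfe' : Quotient.mk s (h c.out).choose = Quotient.mk s c.out := hfe
      exact (h c.out).choose_spec.1 (s.symm (Quotient.exact hfe'))
    · exfalso
      have hfe' : Quotient.mk s c.out = Quotient.mk s (h c.out).choose := hfe
      exact (h c.out).choose_spec.1 (Quotient.exact hfe')
    · rfl
  have hcard := Nat.card_le_card_of_injective f hinj
  rw [Nat.card_prod, Nat.card_eq_fintype_card (α := Bool), Fintype.card_bool] at hcard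
  omega

/-- If `r` is a partition of `{1, …, 2n}` such that `j` and `j + 1` lie in different blocks of
`r` for every `j ∈ {1, …, 2n-1}`, and `1` and `2n` lie in different blocks of `r`, then with
`η = {{1,2}, …, {2n-1,2n}}` and `η' = {{2n,1}, {2,3}, …, {2n-2,2n-1}}` we have
`|r ∨ η| + |r ∨ η'| ≤ |r|`. -/
theorem blocks_join_pairs_le_of_no_adjacent (n : ℕ) (hn : 1 ≤ n) (r : Setoid (Fin (2 * n)))
    (hadj : ∀ j : ℕ, ∀ h : j + 1 < 2 * n, ¬ r.r ⟨j, by omega⟩ ⟨j + 1, h⟩)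
    (hcyc : ¬ r.r ⟨0, by omega⟩ ⟨2 * n - 1, by omega⟩) :
    Nat.card (Quotient (r ⊔ pairPartition n)) + Nat.card (Quotient (r ⊔ pairPartition' n)) ≤
      Nat.card (Quotient r) := by
  -- adjacent elements are in different blocks of r, in all four orientations
  have hne : ∀ a b : Fin (2 * n), (a : ℕ) + 1 = (b : ℕ) → ¬ r.r a b := by
    intro a b hab
    have hb : b = ⟨(a : ℕ) + 1, by omega⟩ := Fin.ext (by exact hab.symm)
    rw [hb]
    exact hadj (a : ℕ) (by omega)
  have hne' : ∀ a b : Fin (2 * n), (a : ℕ) = (b : ℕ) + 1 → ¬ r.r a b :=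
    fun a b hab hh => hne b a hab.symm (r.symm hh)
  have hcyc1 : ∀ a b : Fin (2 * n), (a : ℕ) = 0 → (b : ℕ) = 2 * n - 1 → ¬ r.r a b := by
    intro a b ha hb
    have ha' : a = ⟨0, by omega⟩ := Fin.ext ha
    have hb' : b = ⟨2 * n - 1, by omega⟩ := Fin.ext hb
    rw [ha', hb']
    exact hcyc
  have hcyc2 : ∀ a b : Fin (2 * n), (a : ℕ) = 2 * n - 1 → (b : ℕ) = 0 → ¬ r.r a b :=
    fun a b ha hb hh => hcyc1 b a hb ha (r.symm hh)
  -- membership in the joins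
  have hη : ∀ a b : Fin (2 * n), (a : ℕ) / 2 = (b : ℕ) / 2 →
      (r ⊔ pairPartition n).r a b := by
    intro a b hab
    exact Setoid.le_def.mp le_sup_right (Setoid.ker_def.mpr hab)
  have hη' : ∀ a b : Fin (2 * n), ((a : ℕ) + 1) % (2 * n) / 2 = ((b : ℕ) + 1) % (2 * n) / 2 →
      (r ⊔ pairPartition' n).r a b := by
    intro a b hab
    exact Setoid.le_def.mp le_sup_right (Setoid.ker_def.mpr hab)
  have h1 : 2 * Nat.card (Quotient (r ⊔ pairPartition n)) ≤ Nat.card (Quotient r) := by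
    apply two_mul_card_quotient_le le_sup_left
    intro x
    have hvlt : (x : ℕ) < 2 * n := x.isLt
    rcases Nat.even_or_odd (x : ℕ) with ⟨k, hk⟩ | ⟨k, hk⟩
    · -- even: partner is x + 1
      have hlt : (x : ℕ) + 1 < 2 * n := by omega
      refine ⟨⟨(x : ℕ) + 1, hlt⟩, hne x _ rfl, hη x _ ?_⟩
      show (x : ℕ) / 2 = ((x : ℕ) + 1) / 2
      omega
    · -- odd: partner is x - 1
      refine ⟨⟨(x : ℕ) - 1, by omega⟩, hne' x _ (by simp; omega), hη x _ ?_⟩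
      show (x : ℕ) / 2 = ((x : ℕ) - 1) / 2
      omega
  have h2 : 2 * Nat.card (Quotient (r ⊔ pairPartition' n)) ≤ Nat.card (Quotient r) := by
    apply two_mul_card_quotient_le le_sup_left
    intro x
    have hvlt : (x : ℕ) < 2 * n := x.isLt
    by_cases hv0 : (x : ℕ) = 0
    · -- partner is 2n - 1
      refine ⟨⟨2 * n - 1, by omega⟩, hcyc1 x _ hv0 rfl, hη' x _ ?_⟩
      show ((x : ℕ) + 1) % (2 * n) / 2 = (2 * n - 1 + 1) % (2 * n) / 2
      have e1 : 2 * n - 1 + 1 = 2 * n := by omega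
      rw [hv0, e1, Nat.mod_self, Nat.mod_eq_of_lt (by omega)]
    · by_cases hvtop : (x : ℕ) = 2 * n - 1
      · -- partner is 0
        refine ⟨⟨0, by omega⟩, hcyc2 x _ hvtop rfl, hη' x _ ?_⟩
        show ((x : ℕ) + 1) % (2 * n) / 2 = ((0 : ℕ) + 1) % (2 * n) / 2
        have e1 : (x : ℕ) + 1 = 2 * n := by omega
        rw [e1, Nat.mod_self, Nat.mod_eq_of_lt (by omega)]
      · rcases Nat.even_or_odd (x : ℕ) with ⟨k, hk⟩ | ⟨k, hk⟩
        · -- even, nonzero: partner is x - 1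
          refine ⟨⟨(x : ℕ) - 1, by omega⟩, hne' x _ (by simp; omega), hη' x _ ?_⟩
          show ((x : ℕ) + 1) % (2 * n) / 2 = ((x : ℕ) - 1 + 1) % (2 * n) / 2
          rw [Nat.mod_eq_of_lt (by omega), Nat.mod_eq_of_lt (by omega)]
          omega
        · -- odd, not top: partner is x + 1
          have hlt : (x : ℕ) + 1 < 2 * n := by omega
          refine ⟨⟨(x : ℕ) + 1, hlt⟩, hne x _ rfl, hη' x _ ?_⟩
          show ((x : ℕ) + 1) % (2 * n) / 2 = ((x : ℕ) + 1 + 1) % (2 * n) / 2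
          rw [Nat.mod_eq_of_lt (by omega), Nat.mod_eq_of_lt (by omega)]
          omega
  omega
end

section
/- Let G be a countable amenable group, let T be a tile for G with e ∈ T, and let C ⊆ G be a set of centers for T (so that (t, c) ↦ tc is a bijection from T × C onto G). Then for every finite subset K ⊆ G and every ε > 0, there exists a (K, ε)-invariant finite set F ⊆ G of the form F = TD for some finite subset D ⊆ C. -/
open scoped Pointwise

/-- A group is amenable if it satisfies the Følner condition: for every finite `K` and every
`ε > 0` there is a nonempty finite `(K, ε)`-invariant set `F`, i.e. `|K F \ F| < ε |F|`. -/
def IsAmenableFolner (G : Type*) [Group G] [DecidableEq G] : Prop :=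
  ∀ (K : Finset G) (ε : ℝ), 0 < ε →
    ∃ F : Finset G, F.Nonempty ∧ (((K * F) \ F).card : ℝ) < ε * F.card

/-- If `T` is a tile for a countable amenable group `G` with `e ∈ T` and set of centers `C`
(so that `(t, c) ↦ t * c` is a bijection from `T × C` onto `G`), then for every finite
`K ⊆ G` and every `ε > 0` there is a `(K, ε)`-invariant set of the form `F = T * D` with
`D ⊆ C`. -/
theorem tiled_folner_set (G : Type*) [Group G] [Countable G] [DecidableEq G]
    (hG : IsAmenableFolner G) (T : Finset G) (hT : (1 : G) ∈ T) (C : Set G)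
    (hC : Function.Bijective fun p : T × C => (p.1 : G) * (p.2 : G))
    (K : Finset G) (ε : ℝ) (hε : 0 < ε) :
    ∃ D : Finset G, ↑D ⊆ C ∧ (T * D).Nonempty ∧
      (((K * (T * D)) \ (T * D)).card : ℝ) < ε * (T * D).card := by
  obtain ⟨F, hFne, hFcard⟩ := hG (K * T * T⁻¹) ε hε
  set e := Equiv.ofBijective _ hC with he
  set D := F.image (fun f => ((e.symm f).2 : G)) with hD
  have hDC : ↑D ⊆ C := by
    intro x hx
    simp only [hD, Finset.coe_image, Set.mem_image, Finset.mem_coe] at hx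
    obtain ⟨f, _, rfl⟩ := hx
    exact (e.symm f).2.2
  have hkey : ∀ f : G, ((e.symm f).1 : G) * ((e.symm f).2 : G) = f := fun f =>
    e.apply_symm_apply f
  have hFsub : F ⊆ T * D := by
    intro f hf
    rw [← hkey f]
    exact Finset.mul_mem_mul (e.symm f).1.2 (Finset.mem_image_of_mem _ hf)
  have hTDsub : T * D ⊆ T * T⁻¹ * F := by
    intro x hx
    rw [Finset.mem_mul] at hx
    obtain ⟨t, ht, d, hd, rfl⟩ := hx
    rw [hD, Finset.mem_image] at hd
    obtain ⟨f, hf, rfl⟩ := hd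
    have h2 : ((e.symm f).2 : G) = ((e.symm f).1 : G)⁻¹ * f := by
      rw [eq_inv_mul_iff_mul_eq, hkey f]
    rw [h2, ← mul_assoc]
    exact Finset.mul_mem_mul (Finset.mul_mem_mul ht (Finset.inv_mem_inv (e.symm f).1.2)) hf
  have hsub : (K * (T * D)) \ (T * D) ⊆ (K * T * T⁻¹ * F) \ F := by
    intro x hx
    rw [Finset.mem_sdiff] at hx ⊢
    refine ⟨?_, fun h => hx.2 (hFsub h)⟩
    have h3 : K * (T * D) ⊆ K * T * T⁻¹ * F := by
      calc K * (T * D) ⊆ K * (T * T⁻¹ * F) := Finset.mul_subset_mul_left hTDsub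
        _ = K * T * T⁻¹ * F := by rw [← mul_assoc, ← mul_assoc]
    exact h3 hx.1
  refine ⟨D, hDC, hFne.mono hFsub, ?_⟩
  calc (((K * (T * D)) \ (T * D)).card : ℝ)
      ≤ (((K * T * T⁻¹ * F) \ F).card : ℝ) := by
        exact_mod_cast Finset.card_le_card hsub
    _ < ε * F.card := hFcard
    _ ≤ ε * (T * D).card := by
        have := Finset.card_le_card hFsub
        gcongr
end

section
/- Let 0 < δ < 1, let X and X' be nonempty finite sets, let Y ⊆ X and Y' ⊆ X' satisfy |Y| > (1−δ)|X| and |Y'| > (1−δ)|X'|, and let α : Y → Y' be a bijection. Let G be a group, let F ⊆ G be a finite subset, let ε > 0, and let φ : G → Sym(X) be an (F, ε)-quasi-action of G. Then there exists a map φ' : G → Sym(X') such that φ'_g(α(x)) = α(φ_g(x)) for every g ∈ G and every x ∈ Y ∩ φ_g^{−1}(Y), and φ' is an (F, η)-quasi-action of G on X', where η = ε + 6δ/(1−δ). -/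
open scoped Classical

/-- The normalized Hamming distance between two permutations of a finite set. -/
noncomputable def permDist {X : Type*} [Fintype X] (σ τ : Equiv.Perm X) : ℝ :=
  ((Finset.univ.filter fun x => σ x ≠ τ x).card : ℝ) / (Fintype.card X)

/-- A map `φ : G → Sym X` is an `(F, ε)`-quasi-action if `dist (φ g) id > 1 - ε` for all
`g ∈ F \ {e}` and `dist (φ (g₁⁻¹ g₂)) ((φ g₁)⁻¹ (φ g₂)) < ε` for all `g₁, g₂ ∈ F`. -/
def IsQuasiAction {G : Type*} [Group G] {X : Type*} [Fintype X] (F : Finset G) (ε : ℝ)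
    (φ : G → Equiv.Perm X) : Prop :=
  (∀ g ∈ F, g ≠ 1 → permDist (φ g) 1 > 1 - ε) ∧
    ∀ g₁ ∈ F, ∀ g₂ ∈ F, permDist (φ (g₁⁻¹ * g₂)) ((φ g₁)⁻¹ * φ g₂) < ε

lemma exists_perm_extend {X : Type*} [Fintype X] (s : Set X) (f : X → X)
    (hf : Set.InjOn f s) : ∃ π : Equiv.Perm X, ∀ x ∈ s, π x = f x := by
  classical
  have he1 : ∀ (x : s), ((Equiv.Set.imageOfInjOn f s hf) x : X) = f x := fun x => rfl
  have hcard : Fintype.card (↥(sᶜ : Set X)) = Fintype.card (↥((f '' s)ᶜ : Set X)) := by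
    rw [Fintype.card_compl_set, Fintype.card_compl_set,
      Fintype.card_congr (Equiv.Set.imageOfInjOn f s hf)]
  have e2 : (↥(sᶜ : Set X)) ≃ (↥((f '' s)ᶜ : Set X)) := Fintype.equivOfCardEq hcard
  refine ⟨(Equiv.Set.sumCompl s).symm.trans (((Equiv.Set.imageOfInjOn f s hf).sumCongr e2).trans
    (Equiv.Set.sumCompl (f '' s))), fun x hx => ?_⟩
  simp [Equiv.Set.sumCompl_symm_apply_of_mem hx, he1]

lemma nat_card_comp {X : Type*} [Fintype X] (σ : Equiv.Perm X) (P : X → Prop) :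
    Nat.card {x | P (σ x)} = Nat.card {x | P x} :=
  Nat.card_congr (σ.subtypeEquiv fun _ => Iff.rfl)

lemma nat_card_add_compl {X : Type*} [Fintype X] (P : X → Prop) :
    Nat.card {x | P x} + Nat.card {x | ¬ P x} = Fintype.card X := by
  classical
  rw [Nat.card_eq_fintype_card, Nat.card_eq_fintype_card, ← Fintype.card_sum]
  exact Fintype.card_congr (Equiv.sumCompl P)

lemma card_pull {X X' : Type*} [Fintype X] [Fintype X'] {Y : Set X} {Y' : Set X'} (α : Y ≃ Y')
    (P : X → Prop) :
    Nat.card {x' : X' | ∃ h : x' ∈ Y', P ((α.symm ⟨x', h⟩ : Y) : X)} ≤ Nat.card {x : X | P x} := by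
  apply Nat.card_le_card_of_injective
    (fun z => (⟨((α.symm ⟨z.1, z.2.choose⟩ : Y) : X), z.2.choose_spec⟩ :
      {x : X | P x}))
  rintro ⟨a, ha⟩ ⟨b, hb⟩ hab
  simp only [Subtype.mk.injEq] at hab ⊢
  have h1 : (α.symm ⟨a, ha.choose⟩ : Y) = (α.symm ⟨b, hb.choose⟩ : Y) := Subtype.ext hab
  have h2 := α.symm.injective h1
  exact congrArg Subtype.val h2

lemma permDist_eq {X : Type*} [Fintype X] (σ τ : Equiv.Perm X) :
    permDist σ τ = (Nat.card {x | σ x ≠ τ x} : ℝ) / (Fintype.card X) := by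
  classical
  rw [permDist, Nat.card_eq_fintype_card]
  congr 2
  rw [Fintype.card_subtype]
  congr 1

lemma permDist_nonneg {X : Type*} [Fintype X] (σ τ : Equiv.Perm X) : 0 ≤ permDist σ τ := by
  unfold permDist; positivity

lemma permDist_le_one {X : Type*} [Fintype X] [Nonempty X] (σ τ : Equiv.Perm X) :
    permDist σ τ ≤ 1 := by
  rw [permDist]
  rw [div_le_one (by exact_mod_cast Fintype.card_pos)]
  exact_mod_cast Finset.card_le_card (Finset.filter_subset _ _) |>.trans
    (le_of_eq (Finset.card_univ))

set_option maxHeartbeats 1000000 in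
/-- Given `0 < δ < 1`, nonempty finite sets `X, X'`, subsets `Y ⊆ X`, `Y' ⊆ X'` with
`|Y| > (1 - δ)|X|`, `|Y'| > (1 - δ)|X'|`, a bijection `α : Y → Y'`, and an
`(F, ε)`-quasi-action `φ` of a group `G` on `X`, there is a map `φ' : G → Sym X'` with
`φ'_g (α x) = α (φ_g x)` whenever `x ∈ Y ∩ φ_g⁻¹ Y`, and `φ'` is an `(F, η)`-quasi-action
where `η = ε + 6δ/(1 - δ)`. -/
theorem quasiAction_transport {X X' : Type*} [Fintype X] [Fintype X']
    [Nonempty X] [Nonempty X'] (δ : ℝ) (hδ0 : 0 < δ) (hδ1 : δ < 1)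
    (Y : Set X) (Y' : Set X')
    (hY : (1 - δ) * (Fintype.card X : ℝ) < (Nat.card Y : ℝ))
    (hY' : (1 - δ) * (Fintype.card X' : ℝ) < (Nat.card Y' : ℝ))
    (α : Y ≃ Y')
    (G : Type*) [Group G] (F : Finset G) (ε : ℝ) (hε : 0 < ε)
    (φ : G → Equiv.Perm X) (hφ : IsQuasiAction F ε φ) :
    ∃ φ' : G → Equiv.Perm X',
      (∀ (g : G) (x : Y) (hx : φ g (x : X) ∈ Y),
        (φ' g (α x : X') : X') = (α ⟨φ g (x : X), hx⟩ : X')) ∧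
      IsQuasiAction F (ε + 6 * δ / (1 - δ)) φ' := by
  classical
  -- the partial transported map
  set f : G → X' → X' := fun g x' =>
    if h : x' ∈ Y' then
      if h2 : φ g ((α.symm ⟨x', h⟩ : Y) : X) ∈ Y then
        (α ⟨φ g ((α.symm ⟨x', h⟩ : Y) : X), h2⟩ : X')
      else x'
    else x' with hfdef
  set s : G → Set X' := fun g =>
    {x' | ∃ h : x' ∈ Y', φ g ((α.symm ⟨x', h⟩ : Y) : X) ∈ Y} with hsdef
  have hfval : ∀ (g : G) (x' : X') (h : x' ∈ Y')
      (h2 : φ g ((α.symm ⟨x', h⟩ : Y) : X) ∈ Y),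
      f g x' = (α ⟨φ g ((α.symm ⟨x', h⟩ : Y) : X), h2⟩ : X') := by
    intro g x' h h2
    simp only [hfdef, dif_pos h, dif_pos h2]
  have hinj : ∀ g, Set.InjOn (f g) (s g) := by
    rintro g a ⟨ha, ha2⟩ b ⟨hb, hb2⟩ hab
    rw [hfval g a ha ha2, hfval g b hb hb2] at hab
    have h1 := α.injective (Subtype.ext hab)
    have h2 : φ g ((α.symm ⟨a, ha⟩ : Y) : X) = φ g ((α.symm ⟨b, hb⟩ : Y) : X) :=
      congrArg Subtype.val h1
    have h3 : (α.symm ⟨a, ha⟩ : Y) = α.symm ⟨b, hb⟩ :=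
      Subtype.ext ((φ g).injective h2)
    exact congrArg Subtype.val (α.symm.injective h3)
  choose π hπ using fun g => exists_perm_extend (s g) (f g) (hinj g)
  have key : ∀ (g : G) (x : Y) (hx : φ g (x : X) ∈ Y),
      (π g (α x : X') : X') = (α ⟨φ g (x : X), hx⟩ : X') := by
    intro g x hx
    have h : (α x : X') ∈ Y' := (α x).2
    have hback : (α.symm ⟨(α x : X'), h⟩ : Y) = x := by
      rw [show (⟨(α x : X'), h⟩ : Y') = α x from Subtype.ext rfl, Equiv.symm_apply_apply]
    have h2 : φ g ((α.symm ⟨(α x : X'), h⟩ : Y) : X) ∈ Y := by rw [hback]; exact hx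
    have hmem : (α x : X') ∈ s g := ⟨h, h2⟩
    rw [hπ g _ hmem, hfval g _ h h2]
    have heq : (⟨φ g ((α.symm ⟨(α x : X'), h⟩ : Y) : X), h2⟩ : Y) = ⟨φ g (x : X), hx⟩ :=
      Subtype.ext (by show φ g ((α.symm ⟨(α x : X'), h⟩ : Y) : X) = φ g (x : X); rw [hback])
    exact congrArg (fun y : Y => (α y : X')) heq
  -- numeric setup
  have hd : (0:ℝ) < 1 - δ := by linarith
  have hn : (0:ℝ) < (Fintype.card X : ℝ) := by exact_mod_cast Fintype.card_pos
  have hn' : (0:ℝ) < (Fintype.card X' : ℝ) := by exact_mod_cast Fintype.card_pos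
  have hc : (0:ℝ) < 6 * δ / (1 - δ) := by positivity
  have hYY' : (Nat.card Y' : ℝ) = (Nat.card Y : ℝ) := by
    exact_mod_cast congrArg (fun k : ℕ => (k : ℝ)) (Nat.card_congr α.symm)
  have hmn : (Nat.card Y : ℝ) ≤ (Fintype.card X : ℝ) := by
    have h0 : Nat.card Y ≤ Fintype.card X := by
      rw [← Nat.card_eq_fintype_card]
      exact Nat.card_le_card_of_injective (Subtype.val : Y → X) Subtype.val_injective
    exact_mod_cast h0
  have hmn' : (Nat.card Y : ℝ) ≤ (Fintype.card X' : ℝ) := by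
    have h0 : Nat.card Y' ≤ Fintype.card X' := by
      rw [← Nat.card_eq_fintype_card]
      exact Nat.card_le_card_of_injective (Subtype.val : Y' → X') Subtype.val_injective
    rw [← hYY']
    exact_mod_cast h0
  have hcomplY' : (Nat.card {x' : X' | ¬ x' ∈ Y'} : ℝ)
      = (Fintype.card X' : ℝ) - (Nat.card Y : ℝ) := by
    have h0 := nat_card_add_compl (fun x' : X' => x' ∈ Y')
    have h1 : Nat.card {x' : X' | x' ∈ Y'} = Nat.card Y' := by rw [Set.setOf_mem_eq]
    rw [h1] at h0
    have h2 := congrArg (fun k : ℕ => (k : ℝ)) h0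
    push_cast at h2
    linarith [hYY', h2]
  have hcomplY : (Nat.card {x : X | ¬ x ∈ Y} : ℝ)
      = (Fintype.card X : ℝ) - (Nat.card Y : ℝ) := by
    have h0 := nat_card_add_compl (fun x : X => x ∈ Y)
    have h1 : Nat.card {x : X | x ∈ Y} = Nat.card Y := by rw [Set.setOf_mem_eq]
    rw [h1] at h0
    have h2 := congrArg (fun k : ℕ => (k : ℝ)) h0
    push_cast at h2
    linarith [h2]
  have hEcard : ∀ σ : Equiv.Perm X,
      (Nat.card {x' : X' | ∃ h : x' ∈ Y', ¬ σ ((α.symm ⟨x', h⟩ : Y) : X) ∈ Y} : ℝ)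
        ≤ (Fintype.card X : ℝ) - (Nat.card Y : ℝ) := by
    intro σ
    have h1 := card_pull α (fun x => ¬ σ x ∈ Y)
    have h2 : Nat.card {x : X | ¬ σ x ∈ Y} = Nat.card {x : X | ¬ x ∈ Y} :=
      nat_card_comp σ (fun x => ¬ x ∈ Y)
    calc (Nat.card {x' : X' | ∃ h : x' ∈ Y', ¬ σ ((α.symm ⟨x', h⟩ : Y) : X) ∈ Y} : ℝ)
        ≤ (Nat.card {x : X | ¬ x ∈ Y} : ℝ) := by exact_mod_cast le_trans h1 (le_of_eq h2)
      _ = (Fintype.card X : ℝ) - (Nat.card Y : ℝ) := hcomplY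
  -- the main arithmetic bound
  have hmain : ε ≤ 1 →
      ((Fintype.card X' : ℝ) - Nat.card Y) + (2 * ((Fintype.card X : ℝ) - Nat.card Y)
        + ε * (Fintype.card X : ℝ)) ≤ (ε + 6 * δ / (1 - δ)) * (Fintype.card X' : ℝ) := by
    intro hε1
    set n : ℝ := (Fintype.card X : ℝ)
    set n' : ℝ := (Fintype.card X' : ℝ)
    set m : ℝ := (Nat.card Y : ℝ)
    have hform : (ε + 6 * δ / (1 - δ)) * n' = (ε * n' * (1 - δ) + 6 * δ * n') / (1 - δ) := by
      field_simp
    rw [hform, le_div_iff₀ hd]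
    have t1 : n' - m < δ * n' := by nlinarith [hY', hYY']
    have t2 : n - m < δ * n := by nlinarith [hY]
    have t3 : (1 - δ) * n < n' := by nlinarith [hY, hmn']
    nlinarith [mul_le_mul_of_nonneg_left t3.le hδ0.le,
      mul_le_mul_of_nonneg_left t3.le hε.le,
      mul_nonneg (mul_nonneg (sub_nonneg.mpr hε1) hδ0.le) hn'.le,
      mul_nonneg hδ0.le (sub_nonneg.mpr hmn'),
      mul_le_mul_of_nonneg_left t2.le hd.le,
      mul_pos hδ0 hn', t1]
  refine ⟨π, key, ?_, ?_⟩
  · -- first condition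
    intro g hgF hg1
    rcases le_or_gt ε 1 with hε1 | hε1
    · have hdist := hφ.1 g hgF hg1
      rw [permDist_eq, gt_iff_lt, lt_div_iff₀ hn] at hdist
      simp only [Equiv.Perm.one_apply, ne_eq] at hdist
      -- fixed points of φ g
      have hfix0 := nat_card_add_compl (fun x : X => ¬ φ g x = x)
      have hfixφ : (Nat.card {x : X | φ g x = x} : ℝ) < ε * (Fintype.card X : ℝ) := by
        have h2 : Nat.card {x : X | ¬ ¬ φ g x = x} = Nat.card {x : X | φ g x = x} :=
          Nat.card_congr (Equiv.setCongr (by ext x; simp))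
        rw [h2] at hfix0
        have h3 := congrArg (fun k : ℕ => (k : ℝ)) hfix0
        push_cast at h3
        nlinarith [hdist, h3]
      -- the three bad sets
      have hsub : {x' : X' | π g x' = x'} ⊆
          {x' : X' | ¬ x' ∈ Y'} ∪
          ({x' : X' | ∃ h : x' ∈ Y', ¬ φ g ((α.symm ⟨x', h⟩ : Y) : X) ∈ Y} ∪
           {x' : X' | ∃ h : x' ∈ Y',
              φ g ((α.symm ⟨x', h⟩ : Y) : X) = ((α.symm ⟨x', h⟩ : Y) : X)}) := by
        intro x' hx'
        by_cases h : x' ∈ Y'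
        · by_cases h2 : φ g ((α.symm ⟨x', h⟩ : Y) : X) ∈ Y
          · refine Or.inr (Or.inr ⟨h, ?_⟩)
            have hmem : x' ∈ s g := ⟨h, h2⟩
            have h5 := hπ g x' hmem
            rw [hfval g x' h h2] at h5
            have h4 : (α ⟨φ g ((α.symm ⟨x', h⟩ : Y) : X), h2⟩ : Y') = ⟨x', h⟩ :=
              Subtype.ext (by rw [← h5]; exact hx')
            have h6 := congrArg (fun z : Y' => ((α.symm z : Y) : X)) h4
            simpa using h6
          · exact Or.inr (Or.inl ⟨h, h2⟩)
        · exact Or.inl h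
      have hcard1 : (Nat.card {x' : X' | π g x' = x'} : ℝ) ≤
          (Nat.card {x' : X' | ¬ x' ∈ Y'} : ℝ) +
          ((Nat.card {x' : X' | ∃ h : x' ∈ Y', ¬ φ g ((α.symm ⟨x', h⟩ : Y) : X) ∈ Y} : ℝ) +
           (Nat.card {x' : X' | ∃ h : x' ∈ Y',
              φ g ((α.symm ⟨x', h⟩ : Y) : X) = ((α.symm ⟨x', h⟩ : Y) : X)} : ℝ)) := by
        have hnat : Nat.card {x' : X' | π g x' = x'} ≤
            Nat.card {x' : X' | ¬ x' ∈ Y'} +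
            (Nat.card {x' : X' | ∃ h : x' ∈ Y', ¬ φ g ((α.symm ⟨x', h⟩ : Y) : X) ∈ Y} +
             Nat.card {x' : X' | ∃ h : x' ∈ Y',
                φ g ((α.symm ⟨x', h⟩ : Y) : X) = ((α.symm ⟨x', h⟩ : Y) : X)}) := by
          simp only [Nat.card_coe_set_eq]
          refine le_trans (Set.ncard_le_ncard hsub (Set.toFinite _)) ?_
          refine le_trans (Set.ncard_union_le _ _) ?_
          exact Nat.add_le_add_left (Set.ncard_union_le _ _) _
        exact_mod_cast hnat
      have hA2 : (Nat.card {x' : X' | ∃ h : x' ∈ Y',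
          φ g ((α.symm ⟨x', h⟩ : Y) : X) = ((α.symm ⟨x', h⟩ : Y) : X)} : ℝ)
          ≤ (Nat.card {x : X | φ g x = x} : ℝ) := by
        exact_mod_cast card_pull α (fun x => φ g x = x)
      -- total bound on fixed points of π g
      have htot : (Nat.card {x' : X' | π g x' = x'} : ℝ)
          < (ε + 6 * δ / (1 - δ)) * (Fintype.card X' : ℝ) := by
        have hE := hEcard (φ g)
        have := hmain hε1
        linarith [hcard1, hcomplY', hE, hA2, hfixφ, hmn]
      rw [permDist_eq, gt_iff_lt, lt_div_iff₀ hn']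
      simp only [Equiv.Perm.one_apply, ne_eq]
      have hsum := nat_card_add_compl (fun x' : X' => ¬ π g x' = x')
      have h2 : Nat.card {x' : X' | ¬ ¬ π g x' = x'} = Nat.card {x' : X' | π g x' = x'} :=
        Nat.card_congr (Equiv.setCongr (by ext x'; simp))
      rw [h2] at hsum
      have h3 := congrArg (fun k : ℕ => (k : ℝ)) hsum
      push_cast at h3
      linarith [htot, h3]
    · have h1η : (1:ℝ) - (ε + 6 * δ / (1 - δ)) < 0 := by linarith
      calc (1:ℝ) - (ε + 6 * δ / (1 - δ)) < 0 := h1η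
        _ ≤ permDist (π g) 1 := permDist_nonneg _ _
  · -- second condition
    intro g₁ hg₁ g₂ hg₂
    rcases le_or_gt ε 1 with hε1 | hε1
    · have hdist := hφ.2 g₁ hg₁ g₂ hg₂
      rw [permDist_eq, div_lt_iff₀ hn] at hdist
      have hsub : {x' : X' | π (g₁⁻¹ * g₂) x' ≠ ((π g₁)⁻¹ * π g₂) x'} ⊆
          {x' : X' | ¬ x' ∈ Y'} ∪
          ({x' : X' | ∃ h : x' ∈ Y', ¬ φ (g₁⁻¹ * g₂) ((α.symm ⟨x', h⟩ : Y) : X) ∈ Y} ∪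
           ({x' : X' | ∃ h : x' ∈ Y', ¬ φ g₂ ((α.symm ⟨x', h⟩ : Y) : X) ∈ Y} ∪
            {x' : X' | ∃ h : x' ∈ Y',
              φ (g₁⁻¹ * g₂) ((α.symm ⟨x', h⟩ : Y) : X)
                ≠ ((φ g₁)⁻¹ * φ g₂) ((α.symm ⟨x', h⟩ : Y) : X)})) := by
        intro x' hne
        by_cases h : x' ∈ Y'
        swap
        · exact Or.inl h
        by_cases h1 : φ (g₁⁻¹ * g₂) ((α.symm ⟨x', h⟩ : Y) : X) ∈ Y
        swap
        · exact Or.inr (Or.inl ⟨h, h1⟩)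
        by_cases h2 : φ g₂ ((α.symm ⟨x', h⟩ : Y) : X) ∈ Y
        swap
        · exact Or.inr (Or.inr (Or.inl ⟨h, h2⟩))
        by_cases h3 : φ (g₁⁻¹ * g₂) ((α.symm ⟨x', h⟩ : Y) : X)
            = ((φ g₁)⁻¹ * φ g₂) ((α.symm ⟨x', h⟩ : Y) : X)
        swap
        · exact Or.inr (Or.inr (Or.inr ⟨h, h3⟩))
        exfalso
        apply hne
        have hα2 : ((α (α.symm ⟨x', h⟩) : Y') : X') = x' := by
          rw [Equiv.apply_symm_apply]
        have hcomp : φ g₁ (φ (g₁⁻¹ * g₂) ((α.symm ⟨x', h⟩ : Y) : X))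
            = φ g₂ ((α.symm ⟨x', h⟩ : Y) : X) := by
          rw [h3, Equiv.Perm.mul_apply, Equiv.Perm.inv_def, Equiv.apply_symm_apply]
        have hmem2 : φ g₁ (φ (g₁⁻¹ * g₂) ((α.symm ⟨x', h⟩ : Y) : X)) ∈ Y := by
          rw [hcomp]; exact h2
        show π (g₁⁻¹ * g₂) x' = ((π g₁)⁻¹ * π g₂) x'
        rw [Equiv.Perm.mul_apply, Equiv.Perm.inv_def, Equiv.eq_symm_apply, ← hα2,
          key (g₁⁻¹ * g₂) (α.symm ⟨x', h⟩) h1, key g₂ (α.symm ⟨x', h⟩) h2,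
          key g₁ ⟨φ (g₁⁻¹ * g₂) ((α.symm ⟨x', h⟩ : Y) : X), h1⟩ hmem2]
        exact congrArg (fun y : Y => (α y : X')) (Subtype.ext hcomp)
      have hcard1 : (Nat.card {x' : X' | π (g₁⁻¹ * g₂) x' ≠ ((π g₁)⁻¹ * π g₂) x'} : ℝ) ≤
          (Nat.card {x' : X' | ¬ x' ∈ Y'} : ℝ) +
          ((Nat.card {x' : X' |
              ∃ h : x' ∈ Y', ¬ φ (g₁⁻¹ * g₂) ((α.symm ⟨x', h⟩ : Y) : X) ∈ Y} : ℝ) +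
           ((Nat.card {x' : X' | ∃ h : x' ∈ Y', ¬ φ g₂ ((α.symm ⟨x', h⟩ : Y) : X) ∈ Y} : ℝ) +
            (Nat.card {x' : X' | ∃ h : x' ∈ Y',
              φ (g₁⁻¹ * g₂) ((α.symm ⟨x', h⟩ : Y) : X)
                ≠ ((φ g₁)⁻¹ * φ g₂) ((α.symm ⟨x', h⟩ : Y) : X)} : ℝ))) := by
        have hnat : Nat.card {x' : X' | π (g₁⁻¹ * g₂) x' ≠ ((π g₁)⁻¹ * π g₂) x'} ≤
            Nat.card {x' : X' | ¬ x' ∈ Y'} +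
            (Nat.card {x' : X' |
                ∃ h : x' ∈ Y', ¬ φ (g₁⁻¹ * g₂) ((α.symm ⟨x', h⟩ : Y) : X) ∈ Y} +
             (Nat.card {x' : X' | ∃ h : x' ∈ Y', ¬ φ g₂ ((α.symm ⟨x', h⟩ : Y) : X) ∈ Y} +
              Nat.card {x' : X' | ∃ h : x' ∈ Y',
                φ (g₁⁻¹ * g₂) ((α.symm ⟨x', h⟩ : Y) : X)
                  ≠ ((φ g₁)⁻¹ * φ g₂) ((α.symm ⟨x', h⟩ : Y) : X)})) := by
          simp only [Nat.card_coe_set_eq]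
          refine le_trans (Set.ncard_le_ncard hsub (Set.toFinite _)) ?_
          refine le_trans (Set.ncard_union_le _ _) ?_
          refine Nat.add_le_add_left (le_trans (Set.ncard_union_le _ _) ?_) _
          exact Nat.add_le_add_left (Set.ncard_union_le _ _) _
        exact_mod_cast hnat
      have hB3 : (Nat.card {x' : X' | ∃ h : x' ∈ Y',
          φ (g₁⁻¹ * g₂) ((α.symm ⟨x', h⟩ : Y) : X)
            ≠ ((φ g₁)⁻¹ * φ g₂) ((α.symm ⟨x', h⟩ : Y) : X)} : ℝ)
          ≤ (Nat.card {x : X | φ (g₁⁻¹ * g₂) x ≠ ((φ g₁)⁻¹ * φ g₂) x} : ℝ) := by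
        exact_mod_cast card_pull α (fun x => φ (g₁⁻¹ * g₂) x ≠ ((φ g₁)⁻¹ * φ g₂) x)
      have htot : (Nat.card {x' : X' | π (g₁⁻¹ * g₂) x' ≠ ((π g₁)⁻¹ * π g₂) x'} : ℝ)
          < (ε + 6 * δ / (1 - δ)) * (Fintype.card X' : ℝ) := by
        have hE1 := hEcard (φ (g₁⁻¹ * g₂))
        have hE2 := hEcard (φ g₂)
        have := hmain hε1
        linarith [hcard1, hcomplY', hE1, hE2, hB3, hdist, hmn]
      rw [permDist_eq, div_lt_iff₀ hn']
      exact htot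
    · calc permDist (π (g₁⁻¹ * g₂)) ((π g₁)⁻¹ * π g₂) ≤ 1 := permDist_le_one _ _
        _ < ε + 6 * δ / (1 - δ) := by linarith
end
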